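/- arXiv:2301.10342 — 6 statements merged into one kernel-verified Lean document; each statement's English description precedes it below -/
import Mathlib

section
/- A decorated graph (Ω, f, g, λ) is Rado up to scaling if and only if it is weakly Rado. -/
/-!
Statement 6: A decorated graph `(Ω, f, g, λ)` (for an odd prime `ℓ`, relative to a
fixed isomorphism `log_ℓ : 1 + ℓℤ_ℓ → ℤ_ℓ`) is Rado up to scaling if and only if it
is weakly Rado.

Residues mod `ℓ^n` are encoded as natural numbers `< ℓ^n`; an element of
`(ℤ/ℓ^n)^×` is a natural number `< ℓ^n` not divisible by `ℓ`.  The isomorphism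
`log_ℓ` is encoded by the function `lg : ℤ_ℓ → ℤ_ℓ`, `lg x = log_ℓ (1 + ℓx)`.
-/

noncomputable section

open scoped Classical ENat

/-- `lg` encodes a (topological) group isomorphism `log_ℓ : 1 + ℓℤ_ℓ ≃ ℤ_ℓ`
via `lg x = log_ℓ (1 + ℓ x)` (note `(1+ℓx)(1+ℓy) = 1 + ℓ(x + y + ℓxy)`). -/
structure IsLogIso (ℓ : ℕ) [Fact ℓ.Prime] (lg : ℤ_[ℓ] → ℤ_[ℓ]) : Prop where
  bijective : Function.Bijective lg
  map_mul : ∀ x y : ℤ_[ℓ], lg (x + y + (ℓ : ℤ_[ℓ]) * x * y) = lg x + lg y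
  continuous : Continuous lg

/-- The value of `log_ℓ (1 + a·ℓ^n) mod ℓ^n`, as a natural number `< ℓ^n`
(for `n ≥ 1`). -/
def logVal (ℓ : ℕ) [Fact ℓ.Prime] (lg : ℤ_[ℓ] → ℤ_[ℓ]) (n : ℕ) (a : ℤ_[ℓ]) : ℕ :=
  (PadicInt.toZModPow n (lg (a * (ℓ : ℤ_[ℓ]) ^ (n - 1)))).val

/-- The raw data of a decorated graph: a vertex set `Ω`, the function
`f : Ω → ℤ_{≥1} ∪ {∞}`, the two distinguished vertices `v1 = v_ℓ(1)`,
`v2 = v_ℓ(2)`, the decoration `g` and the labeling `lab`. -/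
structure GraphData where
  Ω : Type
  f : Ω → ℕ∞
  v1 : Ω
  v2 : Ω
  g : Ω → ℕ
  lab : Ω → Ω → ℕ

namespace GraphData

variable (D : GraphData)

/-- `f(v,w) = min (f v) (f w)`, as a natural number (it is finite on all pairs
carrying a label). -/
def fm (v w : D.Ω) : ℕ := (min (D.f v) (D.f w)).toNat

/-- The pairs `(v,w)` carrying a label: distinct, not both in the fiber over `∞`. -/
def Rel (v w : D.Ω) : Prop := v ≠ w ∧ ¬ (D.f v = ⊤ ∧ D.f w = ⊤)

/-- `D` is a decorated graph for the odd prime `ℓ` and the logarithm `lg`. -/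
def IsDecorated (ℓ : ℕ) [Fact ℓ.Prime] (lg : ℤ_[ℓ] → ℤ_[ℓ]) : Prop :=
  Countable D.Ω ∧ Infinite D.Ω ∧
  (∀ v, 1 ≤ D.f v) ∧
  D.v1 ≠ D.v2 ∧ D.f D.v1 = ⊤ ∧ D.f D.v2 = ⊤ ∧
  (∀ v, D.f v = ⊤ → v = D.v1 ∨ v = D.v2) ∧
  (∀ v, D.f v ≠ ⊤ → D.g v < ℓ ^ (D.f v).toNat ∧ ¬ ℓ ∣ D.g v) ∧
  (∀ v w, D.Rel v w → D.lab v w < ℓ ^ D.fm v w) ∧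
  (∀ w, D.f w ≠ ⊤ → D.lab D.v1 w = logVal ℓ lg (D.f w).toNat (D.g w : ℤ_[ℓ])) ∧
  (∀ w, D.f w ≠ ⊤ → D.lab w D.v1 = 0 ∧ D.lab w D.v2 = 0)

/-- `D` is Rado. -/
def IsRado (ℓ : ℕ) [Fact ℓ.Prime] (lg : ℤ_[ℓ] → ℤ_[ℓ]) : Prop :=
  ∀ S : Finset D.Ω, D.v1 ∈ S → D.v2 ∈ S →
  ∀ n : ℕ, 1 ≤ n →
  ∀ α : ℕ, α < ℓ ^ n → ¬ ℓ ∣ α →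
  ∀ μ₁ μ₂ : D.Ω → ℕ,
    (∀ s ∈ S, μ₁ s < ℓ ^ (min (n : ℕ∞) (D.f s)).toNat) →
    (∀ s ∈ S, μ₂ s < ℓ ^ (min (n : ℕ∞) (D.f s)).toNat) →
    μ₂ D.v1 = logVal ℓ lg n (α : ℤ_[ℓ]) →
    μ₁ D.v1 = 0 → μ₁ D.v2 = 0 →
    ∃ v : D.Ω, v ∉ S ∧ D.f v = (n : ℕ∞) ∧ D.g v = α ∧
      ∀ s ∈ S, D.lab v s = μ₁ s ∧ D.lab s v = μ₂ s

/-- `D` is weakly Rado. -/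
def IsWeaklyRado (ℓ : ℕ) [Fact ℓ.Prime] (lg : ℤ_[ℓ] → ℤ_[ℓ]) : Prop :=
  ∀ S : Finset D.Ω, D.v1 ∈ S → D.v2 ∈ S →
  ∀ n : ℕ, 1 ≤ n →
  ∀ α : ℕ, α < ℓ ^ n → ¬ ℓ ∣ α →
  ∀ μ₁ μ₂ : D.Ω → ℕ,
    (∀ s ∈ S, μ₁ s < ℓ ^ (min (n : ℕ∞) (D.f s)).toNat) →
    (∀ s ∈ S, μ₂ s < ℓ ^ (min (n : ℕ∞) (D.f s)).toNat) →
    μ₂ D.v1 = logVal ℓ lg n (α : ℤ_[ℓ]) →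
    μ₁ D.v1 = 0 → μ₁ D.v2 = 0 →
    ∃ v : D.Ω, v ∉ S ∧ ∃ γ : ℕ, γ < ℓ ^ n ∧ ¬ ℓ ∣ γ ∧
      D.f v = (n : ℕ∞) ∧ D.g v = α ∧
      ∀ s ∈ S, D.lab v s = (γ * μ₁ s) % ℓ ^ (min (n : ℕ∞) (D.f s)).toNat ∧
        D.lab s v = μ₂ s

/-- The scaling `γ_• · λ` of the labeling of `D`. -/
def scale (ℓ : ℕ) (γ : D.Ω → ℕ) : GraphData where
  Ω := D.Ω
  f := D.f
  v1 := D.v1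
  v2 := D.v2
  g := D.g
  lab := fun v w => if D.f v = ⊤ then D.lab v w else (γ v * D.lab v w) % ℓ ^ D.fm v w

/-- `D` is Rado up to scaling: some scaling `γ_• · λ` of its labeling by units
`γ_v ∈ (ℤ/ℓ^{f v})^×` is Rado. -/
def IsRadoUpToScaling (ℓ : ℕ) [Fact ℓ.Prime] (lg : ℤ_[ℓ] → ℤ_[ℓ]) : Prop :=
  ∃ γ : D.Ω → ℕ, (∀ v, D.f v ≠ ⊤ → γ v < ℓ ^ (D.f v).toNat ∧ ¬ ℓ ∣ γ v) ∧
    (D.scale ℓ γ).IsRado ℓ lg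

end GraphData

/-!
If `γ_• · λ` is Rado, the vertex it provides for an extension problem, with the incoming labels
multiplied by `γ_s`, solves the same problem for `λ` up to the factor `γ_v⁻¹` on its outgoing
labels: so the graph is weakly Rado. Conversely, enumerate the countably many extension problems
and solve them one after another with the weak Rado property, each one enlarged by the vertices
used so far and with its incoming labels twisted by the inverses of the scalars already chosen.
The new vertex `v` gets the scalar `γ_v := γ⁻¹`, where `γ` is the factor returned; each scalar
is chosen once and never changed, and the limit `γ_•` makes `γ_• · λ` Rado.
-/

section ModArith

theorem mul_mod_mul_mod_cancel {M N a b x : ℕ} (hMN : M ∣ N) (hab : a * b ≡ 1 [MOD N])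
    (hx : x < M) : a * (b * x % M) % M = x := by
  have h : a * (b * x % M) ≡ x [MOD M] :=
    calc a * (b * x % M) ≡ a * (b * x) [MOD M] := (Nat.mod_modEq _ M).mul_left a
      _ = a * b * x := (mul_assoc a b x).symm
      _ ≡ 1 * x [MOD M] := (hab.of_dvd hMN).mul_right x
      _ = x := one_mul x
  rwa [Nat.ModEq, Nat.mod_eq_of_lt hx] at h

theorem eq_of_mul_mod_eq_mul_mod {M c a b : ℕ} (hc : c.Coprime M) (h : c * a % M = c * b % M)
    (ha : a < M) (hb : b < M) : a = b := by
  have h' : a ≡ b [MOD M] := Nat.ModEq.cancel_left_of_coprime hc.symm h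
  rwa [Nat.ModEq, Nat.mod_eq_of_lt ha, Nat.mod_eq_of_lt hb] at h'

def invMod (M a : ℕ) : ℕ := ((a : ZMod M)⁻¹).val

variable {M : ℕ} [NeZero M]

theorem invMod_lt (a : ℕ) : invMod M a < M := ZMod.val_lt _

theorem mul_invMod_modEq {a : ℕ} (ha : a.Coprime M) : a * invMod M a ≡ 1 [MOD M] := by
  rw [← ZMod.natCast_eq_natCast_iff, Nat.cast_mul, invMod, ZMod.natCast_zmod_val, Nat.cast_one]
  exact ZMod.coe_mul_inv_eq_one a ha

theorem invMod_mul_modEq {a : ℕ} (ha : a.Coprime M) : invMod M a * a ≡ 1 [MOD M] :=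
  mul_comm a _ ▸ mul_invMod_modEq ha

theorem not_dvd_invMod {p a : ℕ} (hp : p.Prime) (hpM : p ∣ M) (ha : a.Coprime M) :
    ¬ p ∣ invMod M a := fun h =>
  hp.not_dvd_one (((mul_invMod_modEq ha).dvd_iff hpM).mp (h.mul_left a))

end ModArith

theorem toNat_min_natCast_le (n : ℕ) (x : ℕ∞) : (min (n : ℕ∞) x).toNat ≤ n :=
  ENat.toNat_le_of_le_natCast (min_le_left _ _)

namespace GraphData

variable (D : GraphData) (ℓ : ℕ)

def IsUnitScaling (γ : D.Ω → ℕ) : Prop :=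
  ∀ v, D.f v ≠ ⊤ → γ v < ℓ ^ (D.f v).toNat ∧ ¬ ℓ ∣ γ v

/-- How the labels `s → v` into a new vertex `v` with `f v = n` change under a scaling `c`,
cf. `scale`. -/
def scaleIncoming (n : ℕ) (c μ : D.Ω → ℕ) (s : D.Ω) : ℕ :=
  if D.f s = ⊤ then μ s else c s * μ s % ℓ ^ (min (n : ℕ∞) (D.f s)).toNat

variable {D ℓ}

theorem scale_lab_of_eq_top {γ : D.Ω → ℕ} {v : D.Ω} (hv : D.f v = ⊤) (w : D.Ω) :
    (D.scale ℓ γ).lab v w = D.lab v w :=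
  if_pos hv

theorem scale_lab_of_ne_top {γ : D.Ω → ℕ} {v : D.Ω} (hv : D.f v ≠ ⊤) (w : D.Ω) :
    (D.scale ℓ γ).lab v w = γ v * D.lab v w % ℓ ^ D.fm v w :=
  if_neg hv

theorem fm_comm (v w : D.Ω) : D.fm v w = D.fm w v := by
  rw [fm, fm, min_comm]

theorem fm_of_f_eq {v : D.Ω} {n : ℕ} (hv : D.f v = n) (w : D.Ω) :
    D.fm v w = (min (n : ℕ∞) (D.f w)).toNat := by
  rw [fm, hv]

theorem scaleIncoming_of_eq_top {n : ℕ} {c μ : D.Ω → ℕ} {s : D.Ω} (hs : D.f s = ⊤) :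
    D.scaleIncoming ℓ n c μ s = μ s :=
  if_pos hs

theorem scaleIncoming_of_ne_top {n : ℕ} {c μ : D.Ω → ℕ} {s : D.Ω} (hs : D.f s ≠ ⊤) :
    D.scaleIncoming ℓ n c μ s = c s * μ s % ℓ ^ (min (n : ℕ∞) (D.f s)).toNat :=
  if_neg hs

theorem scaleIncoming_lt {n : ℕ} {c μ : D.Ω → ℕ} {s : D.Ω}
    (hμ : μ s < ℓ ^ (min (n : ℕ∞) (D.f s)).toNat) :
    D.scaleIncoming ℓ n c μ s < ℓ ^ (min (n : ℕ∞) (D.f s)).toNat := by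
  unfold scaleIncoming
  split_ifs
  exacts [hμ, Nat.mod_lt _ (Nat.zero_lt_of_lt hμ)]

theorem IsRadoUpToScaling.isWeaklyRado [Fact ℓ.Prime] {lg : ℤ_[ℓ] → ℤ_[ℓ]}
    (hv1 : D.f D.v1 = ⊤) (hlab : ∀ v w, D.Rel v w → D.lab v w < ℓ ^ D.fm v w)
    (h : D.IsRadoUpToScaling ℓ lg) : D.IsWeaklyRado ℓ lg := by
  have hℓ : ℓ.Prime := Fact.out
  obtain ⟨γ, hγ, hRado⟩ := h
  intro S hv1S hv2S n hn α hα hαℓ μ₁ μ₂ hμ₁ hμ₂ hμ₂v1 hμ₁v1 hμ₁v2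
  obtain ⟨(v : D.Ω), hvS, hfv, hgv, hvlab⟩ :=
    hRado S hv1S hv2S n hn α hα hαℓ μ₁ (D.scaleIncoming ℓ n γ μ₂) hμ₁
      (fun s hs => scaleIncoming_lt (hμ₂ s hs)) ((scaleIncoming_of_eq_top hv1).trans hμ₂v1)
      hμ₁v1 hμ₁v2
  have hfv : D.f v = n := hfv
  have hv_fin : D.f v ≠ ⊤ := hfv ▸ ENat.natCast_ne_top n
  have : NeZero (ℓ ^ n) := ⟨pow_ne_zero n hℓ.ne_zero⟩
  have hγv : (γ v).Coprime (ℓ ^ n) := hℓ.coprime_pow_of_not_dvd (hγ v hv_fin).2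
  refine ⟨v, hvS, invMod (ℓ ^ n) (γ v), invMod_lt _,
    not_dvd_invMod hℓ (dvd_pow_self ℓ (by omega)) hγv, hfv, hgv, fun s hs => ?_⟩
  obtain ⟨hout, hin⟩ := hvlab s hs
  have hvs : v ≠ s := fun h => hvS (h ▸ hs)
  rw [scale_lab_of_ne_top hv_fin, fm_of_f_eq hfv] at hout
  constructor
  · have hlt := hlab v s ⟨hvs, fun h => hv_fin h.1⟩
    rw [fm_of_f_eq hfv] at hlt
    rw [← hout]
    exact (mul_mod_mul_mod_cancel (pow_dvd_pow ℓ (toNat_min_natCast_le n _))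
      (invMod_mul_modEq hγv) hlt).symm
  · by_cases hs_top : D.f s = ⊤
    · rwa [scale_lab_of_eq_top hs_top, scaleIncoming_of_eq_top hs_top] at hin
    · have hlt := hlab s v ⟨hvs.symm, fun h => hv_fin h.2⟩
      rw [fm_comm, fm_of_f_eq hfv] at hlt
      rw [scale_lab_of_ne_top hs_top, fm_comm, fm_of_f_eq hfv,
        scaleIncoming_of_ne_top hs_top] at hin
      exact eq_of_mul_mod_eq_mul_mod (hℓ.coprime_pow_of_not_dvd (hγ s hs_top).2) hin hlt
        (hμ₂ s hs)

/-- An extension problem of the Rado property; its labels are finitely supported, so that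
there are only countably many problems. -/
structure Query (D : GraphData) where
  S : Finset D.Ω
  n : ℕ
  α : ℕ
  μ₁ : D.Ω →₀ ℕ
  μ₂ : D.Ω →₀ ℕ

instance [Countable D.Ω] : Countable D.Query :=
  Function.Injective.countable (f := fun q : D.Query => (q.S, q.n, q.α, q.μ₁, q.μ₂))
    (by rintro ⟨⟩ ⟨⟩ h; simpa using h)

instance : Nonempty D.Query := ⟨⟨∅, 0, 0, 0, 0⟩⟩

/-- A stage of the construction of the scaling: the scalars `γ v` of the vertices in `fixed`
are final. -/
structure Stage (D : GraphData) where
  fixed : Finset D.Ω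
  γ : D.Ω → ℕ

variable (ℓ) in
/-- The conclusion of the weak Rado property for the query `q` enlarged by the fixed vertices,
with the incoming labels twisted by the inverses of the current scalars. -/
def Stage.IsWitness (st : D.Stage) (q : D.Query) (w : D.Ω) (c : ℕ) : Prop :=
  w ∉ q.S ∪ st.fixed ∧ c < ℓ ^ q.n ∧ ¬ ℓ ∣ c ∧ D.f w = q.n ∧ D.g w = q.α ∧
  ∀ s ∈ q.S ∪ st.fixed, D.lab w s = c * q.μ₁ s % ℓ ^ (min (q.n : ℕ∞) (D.f s)).toNat ∧
    D.lab s w = D.scaleIncoming ℓ q.n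
      (fun s => invMod (ℓ ^ (min (q.n : ℕ∞) (D.f s)).toNat) (st.γ s)) q.μ₂ s

variable (ℓ) in
def Stage.next (st : D.Stage) (q : D.Query) : D.Stage :=
  if h : ∃ w c, st.IsWitness ℓ q w c then
    ⟨insert h.choose (q.S ∪ st.fixed),
      Function.update st.γ h.choose (invMod (ℓ ^ q.n) h.choose_spec.choose)⟩
  else st

theorem Stage.exists_next_eq {st : D.Stage} {q : D.Query} (h : ∃ w c, st.IsWitness ℓ q w c) :
    ∃ w c, st.IsWitness ℓ q w c ∧
      st.next ℓ q = ⟨insert w (q.S ∪ st.fixed), Function.update st.γ w (invMod (ℓ ^ q.n) c)⟩ :=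
  ⟨_, _, h.choose_spec.choose_spec, dif_pos h⟩

theorem Stage.fixed_subset_next (st : D.Stage) (q : D.Query) :
    st.fixed ⊆ (st.next ℓ q).fixed := by
  by_cases h : ∃ w c, st.IsWitness ℓ q w c
  · obtain ⟨w, c, -, hnext⟩ := exists_next_eq h
    rw [hnext]
    exact Finset.subset_union_right.trans (Finset.subset_insert _ _)
  · rw [next, dif_neg h]

theorem Stage.next_γ_of_mem {st : D.Stage} (q : D.Query) {v : D.Ω} (hv : v ∈ st.fixed) :
    (st.next ℓ q).γ v = st.γ v := by
  by_cases h : ∃ w c, st.IsWitness ℓ q w c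
  · obtain ⟨w, c, hwit, hnext⟩ := exists_next_eq h
    have hvw : v ≠ w := by rintro rfl; exact hwit.1 (Finset.mem_union_right _ hv)
    rw [hnext]
    exact Function.update_of_ne hvw _ _
  · rw [next, dif_neg h]

variable (ℓ) in
def stage (e : ℕ → D.Query) : ℕ → D.Stage
  | 0 => ⟨∅, fun _ => 1⟩
  | k + 1 => (stage e k).next ℓ (e k)

theorem monotone_stage_fixed (e : ℕ → D.Query) : Monotone fun k => (D.stage ℓ e k).fixed :=
  monotone_nat_of_le_succ fun k => (D.stage ℓ e k).fixed_subset_next (e k)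

theorem stage_γ_of_mem (e : ℕ → D.Query) {k m : ℕ} (hkm : k ≤ m) {v : D.Ω}
    (hv : v ∈ (D.stage ℓ e k).fixed) : (D.stage ℓ e m).γ v = (D.stage ℓ e k).γ v := by
  induction m, hkm using Nat.le_induction with
  | base => rfl
  | succ m hkm ih =>
    exact ((D.stage ℓ e m).next_γ_of_mem (e m) (monotone_stage_fixed e hkm hv)).trans ih

variable (ℓ) in
def limitScaling (e : ℕ → D.Query) (v : D.Ω) : ℕ :=
  if h : ∃ k, v ∈ (D.stage ℓ e k).fixed then (D.stage ℓ e (Nat.find h)).γ v else 1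

theorem limitScaling_eq (e : ℕ → D.Query) {k : ℕ} {v : D.Ω} (hv : v ∈ (D.stage ℓ e k).fixed) :
    D.limitScaling ℓ e v = (D.stage ℓ e k).γ v := by
  have h : ∃ k, v ∈ (D.stage ℓ e k).fixed := ⟨k, hv⟩
  rw [limitScaling, dif_pos h]
  exact (stage_γ_of_mem e (Nat.find_min' h hv) (Nat.find_spec h)).symm

section Prime

variable [Fact ℓ.Prime]

theorem Stage.isUnitScaling_next (hf : ∀ v, 1 ≤ D.f v) {st : D.Stage}
    (hst : D.IsUnitScaling ℓ st.γ) (q : D.Query) : D.IsUnitScaling ℓ (st.next ℓ q).γ := by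
  have hℓ : ℓ.Prime := Fact.out
  by_cases h : ∃ w c, st.IsWitness ℓ q w c
  · obtain ⟨w, c, ⟨-, -, hcℓ, hfw, -⟩, hnext⟩ := exists_next_eq h
    rw [hnext]
    dsimp only
    intro v hv
    rcases eq_or_ne v w with rfl | hvw
    · have hn : 1 ≤ q.n := by exact_mod_cast hfw ▸ hf v
      have : NeZero (ℓ ^ q.n) := ⟨pow_ne_zero _ hℓ.ne_zero⟩
      rw [Function.update_self, hfw, ENat.toNat_natCast]
      exact ⟨invMod_lt _, not_dvd_invMod hℓ (dvd_pow_self ℓ (by omega))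
        (hℓ.coprime_pow_of_not_dvd hcℓ)⟩
    · rw [Function.update_of_ne hvw]
      exact hst v hv
  · rwa [next, dif_neg h]

theorem isUnitScaling_stage (hf : ∀ v, 1 ≤ D.f v) (e : ℕ → D.Query) (k : ℕ) :
    D.IsUnitScaling ℓ (D.stage ℓ e k).γ := by
  induction k with
  | zero =>
    have hℓ : ℓ.Prime := Fact.out
    intro v hv
    have hfv : (D.f v).toNat ≠ 0 := fun h0 =>
      (ENat.toNat_eq_zero.mp h0).elim (fun h => by simpa [h] using hf v) hv
    exact ⟨Nat.one_lt_pow hfv hℓ.one_lt, hℓ.not_dvd_one⟩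
  | succ k ih => exact Stage.isUnitScaling_next hf ih (e k)

theorem isUnitScaling_limitScaling (hf : ∀ v, 1 ≤ D.f v) (e : ℕ → D.Query) :
    D.IsUnitScaling ℓ (D.limitScaling ℓ e) := by
  intro v hv
  by_cases h : ∃ k, v ∈ (D.stage ℓ e k).fixed
  · obtain ⟨k, hk⟩ := h
    rw [limitScaling_eq e hk]
    exact isUnitScaling_stage hf e k v hv
  · rw [limitScaling, dif_neg h]
    exact isUnitScaling_stage hf e 0 v hv

theorem Stage.IsWitness.scale_lab {st : D.Stage} {q : D.Query} {w : D.Ω} {c : ℕ}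
    (hwit : st.IsWitness ℓ q w c) (hst : D.IsUnitScaling ℓ st.γ) {γ : D.Ω → ℕ}
    (hγw : γ w = invMod (ℓ ^ q.n) c) (hγ : ∀ s ∈ q.S ∪ st.fixed, γ s = st.γ s)
    {s : D.Ω} (hs : s ∈ q.S ∪ st.fixed)
    (hμ₁ : q.μ₁ s < ℓ ^ (min (q.n : ℕ∞) (D.f s)).toNat)
    (hμ₂ : q.μ₂ s < ℓ ^ (min (q.n : ℕ∞) (D.f s)).toNat) :
    (D.scale ℓ γ).lab w s = q.μ₁ s ∧ (D.scale ℓ γ).lab s w = q.μ₂ s := by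
  have hℓ : ℓ.Prime := Fact.out
  obtain ⟨-, -, hcℓ, hfw, -, hwlab⟩ := hwit
  obtain ⟨hout, hin⟩ := hwlab s hs
  have hw_fin : D.f w ≠ ⊤ := hfw ▸ ENat.natCast_ne_top _
  have : NeZero (ℓ ^ q.n) := ⟨pow_ne_zero _ hℓ.ne_zero⟩
  constructor
  · rw [scale_lab_of_ne_top hw_fin, fm_of_f_eq hfw, hout, hγw]
    exact mul_mod_mul_mod_cancel (pow_dvd_pow ℓ (toNat_min_natCast_le _ _))
      (invMod_mul_modEq (hℓ.coprime_pow_of_not_dvd hcℓ)) hμ₁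
  · by_cases hs_top : D.f s = ⊤
    · rw [scale_lab_of_eq_top hs_top, hin, scaleIncoming_of_eq_top hs_top]
    · have : NeZero (ℓ ^ (min (q.n : ℕ∞) (D.f s)).toNat) := ⟨pow_ne_zero _ hℓ.ne_zero⟩
      rw [scale_lab_of_ne_top hs_top, fm_comm, fm_of_f_eq hfw, hin,
        scaleIncoming_of_ne_top hs_top, hγ s hs]
      exact mul_mod_mul_mod_cancel dvd_rfl
        (mul_invMod_modEq (hℓ.coprime_pow_of_not_dvd (hst s hs_top).2)) hμ₂

variable {lg : ℤ_[ℓ] → ℤ_[ℓ]}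

variable (ℓ lg) in
/-- The hypotheses of the (weak) Rado property, with `μ₁`, `μ₂` bounded everywhere. -/
def Query.Valid (q : D.Query) : Prop :=
  D.v1 ∈ q.S ∧ D.v2 ∈ q.S ∧ 1 ≤ q.n ∧ q.α < ℓ ^ q.n ∧ ¬ ℓ ∣ q.α ∧
  (∀ s, q.μ₁ s < ℓ ^ (min (q.n : ℕ∞) (D.f s)).toNat) ∧
  (∀ s, q.μ₂ s < ℓ ^ (min (q.n : ℕ∞) (D.f s)).toNat) ∧
  q.μ₂ D.v1 = logVal ℓ lg q.n (q.α : ℤ_[ℓ]) ∧ q.μ₁ D.v1 = 0 ∧ q.μ₁ D.v2 = 0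

theorem IsWeaklyRado.exists_isWitness (h : D.IsWeaklyRado ℓ lg) (hv1 : D.f D.v1 = ⊤)
    {q : D.Query} (hq : q.Valid ℓ lg) (st : D.Stage) : ∃ w c, st.IsWitness ℓ q w c := by
  obtain ⟨hv1S, hv2S, hn, hα, hαℓ, hμ₁, hμ₂, hμ₂v1, hμ₁v1, hμ₁v2⟩ := hq
  obtain ⟨w, hwS, c, hc, hcℓ, hfw, hgw, hwlab⟩ :=
    h (q.S ∪ st.fixed) (Finset.mem_union_left _ hv1S) (Finset.mem_union_left _ hv2S) q.n hn q.α
      hα hαℓ q.μ₁ _ (fun s _ => hμ₁ s) (fun s _ => scaleIncoming_lt (hμ₂ s))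
      ((scaleIncoming_of_eq_top hv1).trans hμ₂v1) hμ₁v1 hμ₁v2
  exact ⟨w, c, hwS, hc, hcℓ, hfw, hgw, hwlab⟩

theorem IsWeaklyRado.exists_scale_lab_eq (h : D.IsWeaklyRado ℓ lg) (hf : ∀ v, 1 ≤ D.f v)
    (hv1 : D.f D.v1 = ⊤) {e : ℕ → D.Query} {k : ℕ} (hq : (e k).Valid ℓ lg) :
    ∃ w ∉ (e k).S, D.f w = (e k).n ∧ D.g w = (e k).α ∧ ∀ s ∈ (e k).S,
      (D.scale ℓ (D.limitScaling ℓ e)).lab w s = (e k).μ₁ s ∧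
        (D.scale ℓ (D.limitScaling ℓ e)).lab s w = (e k).μ₂ s := by
  obtain ⟨w, c, hwit, hnext⟩ := Stage.exists_next_eq (h.exists_isWitness hv1 hq (D.stage ℓ e k))
  replace hnext : D.stage ℓ e (k + 1) = _ := hnext
  have hmem : insert w ((e k).S ∪ (D.stage ℓ e k).fixed) ⊆ (D.stage ℓ e (k + 1)).fixed := by
    rw [hnext]
  have hγw : D.limitScaling ℓ e w = invMod (ℓ ^ (e k).n) c := by
    rw [limitScaling_eq e (hmem (Finset.mem_insert_self _ _)), hnext]
    exact Function.update_self w _ (D.stage ℓ e k).γ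
  have hγ : ∀ s ∈ (e k).S ∪ (D.stage ℓ e k).fixed,
      D.limitScaling ℓ e s = (D.stage ℓ e k).γ s := by
    intro s hs
    have hsw : s ≠ w := by rintro rfl; exact hwit.1 hs
    rw [limitScaling_eq e (hmem (Finset.mem_insert_of_mem hs)), hnext]
    exact Function.update_of_ne hsw _ (D.stage ℓ e k).γ
  have ⟨hwT, _, _, hfw, hgw, _⟩ := hwit
  obtain ⟨-, -, -, -, -, hμ₁, hμ₂, -⟩ := hq
  exact ⟨w, fun hw => hwT (Finset.mem_union_left _ hw), hfw, hgw, fun s hs =>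
    hwit.scale_lab (isUnitScaling_stage hf e k) hγw hγ (Finset.mem_union_left _ hs)
      (hμ₁ s) (hμ₂ s)⟩

theorem IsWeaklyRado.isRadoUpToScaling [Countable D.Ω] (hf : ∀ v, 1 ≤ D.f v)
    (hv1 : D.f D.v1 = ⊤) (h : D.IsWeaklyRado ℓ lg) : D.IsRadoUpToScaling ℓ lg := by
  obtain ⟨e, he⟩ := exists_surjective_nat D.Query
  refine ⟨D.limitScaling ℓ e, isUnitScaling_limitScaling hf e, ?_⟩
  intro (S : Finset D.Ω) hv1S hv2S n hn α hα hαℓ (μ₁ : D.Ω → ℕ) (μ₂ : D.Ω → ℕ) hμ₁ hμ₂ hμ₂v1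
    hμ₁v1 hμ₁v2
  have hpos : ∀ s, 0 < ℓ ^ (min (n : ℕ∞) (D.f s)).toNat := fun s =>
    pow_pos (Fact.out : ℓ.Prime).pos _
  obtain ⟨k, hk⟩ := he ⟨S, n, α, Finsupp.indicator S fun s _ => μ₁ s,
    Finsupp.indicator S fun s _ => μ₂ s⟩
  have hq : (e k).Valid ℓ lg := by
    rw [hk]
    refine ⟨hv1S, hv2S, hn, hα, hαℓ, fun s => ?_, fun s => ?_, ?_, ?_, ?_⟩ <;>
      dsimp only <;> rw [Finsupp.indicator_apply]
    · split_ifs with hs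
      exacts [hμ₁ s hs, hpos s]
    · split_ifs with hs
      exacts [hμ₂ s hs, hpos s]
    exacts [(dif_pos hv1S).trans hμ₂v1, (dif_pos hv1S).trans hμ₁v1, (dif_pos hv2S).trans hμ₁v2]
  obtain ⟨w, hwS, hfw, hgw, hwlab⟩ := h.exists_scale_lab_eq hf hv1 hq
  rw [hk] at hwS hfw hgw hwlab
  refine ⟨w, hwS, hfw, hgw, fun s hs => ?_⟩
  rw [← Finsupp.indicator_of_mem hs (fun s _ => μ₁ s),
    ← Finsupp.indicator_of_mem hs (fun s _ => μ₂ s)]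
  exact hwlab s hs

end Prime

end GraphData

theorem statement6_general (ℓ : ℕ) [Fact ℓ.Prime]
    (lg : ℤ_[ℓ] → ℤ_[ℓ])
    (D : GraphData) (hD : D.IsDecorated ℓ lg) :
    D.IsRadoUpToScaling ℓ lg ↔ D.IsWeaklyRado ℓ lg := by
  obtain ⟨_, -, hf, -, hv1, -, -, -, hlab, -, -⟩ := hD
  exact ⟨fun h => h.isWeaklyRado hv1 hlab, fun h => h.isRadoUpToScaling hf hv1⟩

theorem statement6 (ℓ : ℕ) [Fact ℓ.Prime] (hodd : Odd ℓ)
    (lg : ℤ_[ℓ] → ℤ_[ℓ]) (hlg : IsLogIso ℓ lg)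
    (D : GraphData) (hD : D.IsDecorated ℓ lg) :
    D.IsRadoUpToScaling ℓ lg ↔ D.IsWeaklyRado ℓ lg :=
  statement6_general ℓ lg D hD
end
end

section
/- Any two Rado decorated graphs are isomorphic as decorated graphs. -/
/-!
Statement 7: Any two Rado decorated graphs (for an odd prime `ℓ`, relative to a
fixed isomorphism `log_ℓ : 1 + ℓℤ_ℓ → ℤ_ℓ`) are isomorphic as decorated graphs.

Residues mod `ℓ^n` are encoded as natural numbers `< ℓ^n`; an element of
`(ℤ/ℓ^n)^×` is a natural number `< ℓ^n` not divisible by `ℓ`.  The isomorphism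
`log_ℓ` is encoded by the function `lg : ℤ_ℓ → ℤ_ℓ`, `lg x = log_ℓ (1 + ℓx)`.
-/

noncomputable section

open scoped Classical ENat

/-- An isomorphism of decorated graphs. -/
structure GraphIso (D D' : GraphData) where
  φ : D.Ω ≃ D'.Ω
  f_eq : ∀ v, D'.f (φ v) = D.f v
  g_eq : ∀ v, D.f v ≠ ⊤ → D'.g (φ v) = D.g v
  lab_eq : ∀ v w, D.Rel v w → D'.lab (φ v) (φ w) = D.lab v w

/-!
Cantor's back-and-forth argument. Call a finite set of pairs a partial isomorphism if it
matches `v_ℓ(1), v_ℓ(2)` with their counterparts and preserves `f`, `g` and `λ`. A vertex `x`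
not yet matched has finite `f x = n`, and the labels between `x` and the matched vertices
satisfy exactly the constraints in the Rado property of the other graph: `λ(v_ℓ(1), x)` is the
logarithm of `1 + g(x) ℓⁿ`, and `λ(x, v_ℓ(i)) = 0`. So the Rado property provides a partner for
`x`, and symmetrically for vertices of the other graph. Alternating along enumerations of the two
countable vertex sets, the union of the resulting chain of partial isomorphisms is an
isomorphism.
-/

section BackAndForth

variable {α β : Type*} (R : α × β → α × β → Prop) (G : Finset (α × β) → Prop)

theorem exists_chain_of_forth_back {p₀ : Finset (α × β)} (h₀ : G p₀)
    (forth : ∀ p, G p → ∀ a, ∃ b, G (insert (a, b) p))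
    (back : ∀ p, G p → ∀ b, ∃ a, G (insert (a, b) p)) (ea : ℕ → α) (eb : ℕ → β) :
    ∃ s : ℕ → Finset (α × β), Monotone s ∧ (∀ n, G (s n)) ∧
      ∀ n, (∃ b, (ea n, b) ∈ s (n + 1)) ∧ ∃ a, (a, eb n) ∈ s (n + 1) := by
  have step : ∀ p : {p // G p}, ∀ n : ℕ, ∃ q : {q // G q},
      p.1 ⊆ q.1 ∧ (∃ b, (ea n, b) ∈ q.1) ∧ ∃ a, (a, eb n) ∈ q.1 := by
    rintro ⟨p, hp⟩ n
    obtain ⟨b, hb⟩ := forth p hp (ea n)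
    obtain ⟨a, ha⟩ := back _ hb (eb n)
    exact ⟨⟨_, ha⟩, (Finset.subset_insert _ _).trans (Finset.subset_insert _ _),
      ⟨b, Finset.mem_insert_of_mem (Finset.mem_insert_self _ _)⟩, ⟨a, Finset.mem_insert_self _ _⟩⟩
  choose next hsub hfst hsnd using step
  let s : ℕ → {p // G p} := fun n => Nat.rec ⟨p₀, h₀⟩ (fun k q => next q k) n
  exact ⟨fun n => (s n).1, monotone_nat_of_le_succ fun n => hsub (s n) n, fun n => (s n).2,
    fun n => ⟨hfst (s n) n, hsnd (s n) n⟩⟩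

theorem exists_equiv_of_forth_back [Countable α] [Countable β] [Nonempty α] [Nonempty β]
    (hR : ∀ q q', R q q' → (q.1 = q'.1 ↔ q.2 = q'.2))
    (hG : ∀ p, G p → ∀ q ∈ p, ∀ q' ∈ p, R q q') {p₀ : Finset (α × β)} (h₀ : G p₀)
    (forth : ∀ p, G p → ∀ a, ∃ b, G (insert (a, b) p))
    (back : ∀ p, G p → ∀ b, ∃ a, G (insert (a, b) p)) :
    ∃ e : α ≃ β, ∀ a a', R (a, e a) (a', e a') := by
  obtain ⟨ea, hea⟩ := exists_surjective_nat α
  obtain ⟨eb, heb⟩ := exists_surjective_nat β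
  obtain ⟨s, hmono, hsG, hcover⟩ := exists_chain_of_forth_back G h₀ forth back ea eb
  let P : α → β → Prop := fun a b => ∃ n, (a, b) ∈ s n
  have hPR : ∀ {a b a' b'}, P a b → P a' b' → R (a, b) (a', b') := by
    rintro a b a' b' ⟨n, hn⟩ ⟨n', hn'⟩
    exact hG _ (hsG (max n n')) _ (hmono (le_max_left n n') hn) _ (hmono (le_max_right n n') hn')
  have total : ∀ a, ∃ b, P a b := by
    intro a
    obtain ⟨n, rfl⟩ := hea a
    obtain ⟨b, hb⟩ := (hcover n).1
    exact ⟨b, n + 1, hb⟩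
  have onto : ∀ b, ∃ a, P a b := by
    intro b
    obtain ⟨n, rfl⟩ := heb b
    obtain ⟨a, ha⟩ := (hcover n).2
    exact ⟨a, n + 1, ha⟩
  choose e he using total
  have hbij : Function.Bijective e :=
    ⟨fun a a' h => (hR _ _ (hPR (he a) (he a'))).2 h, fun b =>
      let ⟨a, ha⟩ := onto b
      ⟨a, (hR _ _ (hPR (he a) ha)).1 rfl⟩⟩
  exact ⟨Equiv.ofBijective e hbij, fun a a' => hPR (he a) (he a')⟩

end BackAndForth

namespace GraphData

variable {ℓ : ℕ} [Fact ℓ.Prime] {lg : ℤ_[ℓ] → ℤ_[ℓ]} {D D' : GraphData}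

def PairsCompatible (D D' : GraphData) (q q' : D.Ω × D'.Ω) : Prop :=
  (q.1 = q'.1 ↔ q.2 = q'.2) ∧ D'.f q.2 = D.f q.1 ∧ (D.f q.1 ≠ ⊤ → D'.g q.2 = D.g q.1) ∧
    (D.Rel q.1 q'.1 → D'.lab q.2 q'.2 = D.lab q.1 q'.1)

def IsPartialIso (D D' : GraphData) (p : Finset (D.Ω × D'.Ω)) : Prop :=
  (D.v1, D'.v1) ∈ p ∧ (D.v2, D'.v2) ∈ p ∧ ∀ q ∈ p, ∀ q' ∈ p, D.PairsCompatible D' q q'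

theorem isPartialIso_distinguished (hD : D.IsDecorated ℓ lg) (hD' : D'.IsDecorated ℓ lg) :
    D.IsPartialIso D' {(D.v1, D'.v1), (D.v2, D'.v2)} := by
  obtain ⟨-, -, -, hne, h1, h2, -⟩ := hD
  obtain ⟨-, -, -, hne', h1', h2', -⟩ := hD'
  refine ⟨Finset.mem_insert_self _ _, Finset.mem_insert_of_mem (Finset.mem_singleton_self _), ?_⟩
  simp only [Finset.mem_insert, Finset.mem_singleton, forall_eq_or_imp, forall_eq]
  simp [PairsCompatible, Rel, hne, hne', hne.symm, hne'.symm, h1, h2, h1', h2']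

theorem IsPartialIso.swap {p : Finset (D.Ω × D'.Ω)} (hp : D.IsPartialIso D' p) :
    D'.IsPartialIso D (p.image Prod.swap) := by
  obtain ⟨h1, h2, hcompat⟩ := hp
  refine ⟨Finset.mem_image_of_mem _ h1, Finset.mem_image_of_mem _ h2, ?_⟩
  simp only [Finset.forall_mem_image]
  intro q hq q' hq'
  obtain ⟨hiff, hf, hg, hlab⟩ := hcompat q hq q' hq'
  have hf' := (hcompat q' hq' q' hq').2.1
  refine ⟨hiff.symm, hf.symm, fun h => (hg (hf ▸ h)).symm, fun ⟨hne, hnt⟩ => (hlab ⟨?_, ?_⟩).symm⟩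
  · exact fun h => hne (hiff.mp h)
  · exact fun h => hnt ⟨hf.trans h.1, hf'.trans h.2⟩

theorem IsPartialIso.insert_of_compatible {p : Finset (D.Ω × D'.Ω)} (hp : D.IsPartialIso D' p)
    {q : D.Ω × D'.Ω} (hq : D.PairsCompatible D' q q) (hl : ∀ q' ∈ p, D.PairsCompatible D' q q')
    (hr : ∀ q' ∈ p, D.PairsCompatible D' q' q) : D.IsPartialIso D' (insert q p) := by
  refine ⟨Finset.mem_insert_of_mem hp.1, Finset.mem_insert_of_mem hp.2.1, ?_⟩
  simp only [Finset.forall_mem_insert]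
  exact ⟨⟨hq, hl⟩, fun q' hq' => ⟨hr q' hq', hp.2.2 q' hq'⟩⟩

theorem IsPartialIso.exists_insert (hD : D.IsDecorated ℓ lg) (hR' : D'.IsRado ℓ lg)
    {p : Finset (D.Ω × D'.Ω)} (hp : D.IsPartialIso D' p) (x : D.Ω) :
    ∃ y, D.IsPartialIso D' (insert (x, y) p) := by
  by_cases hx : ∃ y, (x, y) ∈ p
  · obtain ⟨y, hy⟩ := hx
    exact ⟨y, by rwa [Finset.insert_eq_of_mem hy]⟩
  simp only [not_exists] at hx
  obtain ⟨-, -, hf1, -, -, -, htop, hg, hlab, hlog, hzero⟩ := hD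
  have hcompat := hp.2.2
  have hxf : D.f x ≠ ⊤ := fun h =>
    (htop x h).elim (fun h => hx _ (h ▸ hp.1)) (fun h => hx _ (h ▸ hp.2.1))
  set n := (D.f x).toNat
  have hfx : D.f x = n := (ENat.natCast_toNat hxf).symm
  have hn : 1 ≤ n := by exact_mod_cast hfx ▸ hf1 x
  have hrel : ∀ {a b}, (a, b) ∈ p → D.Rel x a ∧ D.Rel a x := fun hab =>
    ⟨⟨fun h => hx _ (h ▸ hab), fun h => hxf h.1⟩, ⟨fun h => hx _ (h ▸ hab), fun h => hxf h.2⟩⟩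
  have hmin : ∀ {a b}, (a, b) ∈ p → (min (n : ℕ∞) (D'.f b)).toNat = D.fm x a := fun hab => by
    rw [fm, hfx, (hcompat _ hab _ hab).2.1]
  let pre : D'.Ω → D.Ω := fun b => if h : ∃ a, (a, b) ∈ p then h.choose else x
  have hpre : ∀ {a b}, (a, b) ∈ p → pre b = a := fun {a b} hab => by
    have hex : ∃ a, (a, b) ∈ p := ⟨a, hab⟩
    simp only [pre, dif_pos hex]
    exact (hcompat _ hex.choose_spec _ hab).1.mpr rfl
  obtain ⟨y, hyS, hyf, hyg, hylab⟩ := hR' (p.image Prod.snd) (Finset.mem_image_of_mem _ hp.1)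
    (Finset.mem_image_of_mem _ hp.2.1) n hn (D.g x) (hg x hxf).1 (hg x hxf).2
    (fun b => D.lab x (pre b)) (fun b => D.lab (pre b) x)
    (by
      simp only [Finset.forall_mem_image]
      rintro ⟨a, b⟩ hab
      rw [hpre hab, hmin hab]
      exact hlab _ _ (hrel hab).1)
    (by
      simp only [Finset.forall_mem_image]
      rintro ⟨a, b⟩ hab
      rw [hpre hab, hmin hab, fm, min_comm]
      exact hlab _ _ (hrel hab).2)
    (by rw [hpre hp.1, hlog x hxf])
    (by rw [hpre hp.1, (hzero x hxf).1])
    (by rw [hpre hp.2.1, (hzero x hxf).2])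
  have hy : ∀ {a b}, (a, b) ∈ p → y ≠ b := fun hab h =>
    hyS (h ▸ Finset.mem_image_of_mem Prod.snd hab)
  have hxy : D.PairsCompatible D' (x, y) (x, y) :=
    ⟨iff_of_true rfl rfl, hyf.trans hfx.symm, fun _ => hyg, fun h => absurd rfl h.1⟩
  refine ⟨y, hp.insert_of_compatible hxy ?_ ?_⟩
  · rintro ⟨a, b⟩ hab
    refine ⟨iff_of_false (hrel hab).1.1 (hy hab), hxy.2.1, hxy.2.2.1, fun _ => ?_⟩
    rw [(hylab b (Finset.mem_image_of_mem _ hab)).1, hpre hab]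
  · rintro ⟨a, b⟩ hab
    refine ⟨iff_of_false (hrel hab).2.1 (hy hab).symm, (hcompat _ hab _ hab).2.1,
      (hcompat _ hab _ hab).2.2.1, fun _ => ?_⟩
    rw [(hylab b (Finset.mem_image_of_mem _ hab)).2, hpre hab]

theorem IsPartialIso.exists_insert_left (hD' : D'.IsDecorated ℓ lg) (hR : D.IsRado ℓ lg)
    {p : Finset (D.Ω × D'.Ω)} (hp : D.IsPartialIso D' p) (y : D'.Ω) :
    ∃ x, D.IsPartialIso D' (insert (x, y) p) := by
  obtain ⟨x, hx⟩ := hp.swap.exists_insert hD' hR y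
  refine ⟨x, ?_⟩
  simpa [Finset.image_insert, Finset.image_image] using hx.swap

end GraphData

theorem statement7_general (ℓ : ℕ) [Fact ℓ.Prime]
    (lg : ℤ_[ℓ] → ℤ_[ℓ])
    (D D' : GraphData) (hD : D.IsDecorated ℓ lg) (hD' : D'.IsDecorated ℓ lg)
    (hRado : D.IsRado ℓ lg) (hRado' : D'.IsRado ℓ lg) :
    Nonempty (GraphIso D D') := by
  have : Countable D.Ω := hD.1
  have : Countable D'.Ω := hD'.1
  have : Nonempty D.Ω := ⟨D.v1⟩
  have : Nonempty D'.Ω := ⟨D'.v1⟩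
  obtain ⟨e, he⟩ := exists_equiv_of_forth_back (D.PairsCompatible D') (D.IsPartialIso D')
    (fun _ _ h => h.1) (fun _ hp => hp.2.2) (GraphData.isPartialIso_distinguished hD hD')
    (fun _ hp => hp.exists_insert hD hRado') (fun _ hp => hp.exists_insert_left hD' hRado)
  exact ⟨⟨e, fun v => (he v v).2.1, fun v => (he v v).2.2.1, fun v w => (he v w).2.2.2⟩⟩

theorem statement7 (ℓ : ℕ) [Fact ℓ.Prime] (hodd : Odd ℓ)
    (lg : ℤ_[ℓ] → ℤ_[ℓ]) (hlg : IsLogIso ℓ lg)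
    (D D' : GraphData) (hD : D.IsDecorated ℓ lg) (hD' : D'.IsDecorated ℓ lg)
    (hRado : D.IsRado ℓ lg) (hRado' : D'.IsRado ℓ lg) :
    Nonempty (GraphIso D D') :=
  statement7_general ℓ lg D D' hD hD' hRado hRado'
end
end

section
/- Fix a countably infinite set Ω and a function f : Ω → ℤ_{≥1} ∪ {∞} whose fiber over ∞ has exactly two elements and such that f⁻¹(n) is infinite for every n ∈ ℤ_{≥1}. Equip the compact group (∏_{v ∈ Ω_fin} (ℤ/ℓ^{f(v)}ℤ)^×) × (∏_{(v,w)} ℤ/ℓ^{f(v,w)}ℤ) — where the second product runs over ordered pairs (v,w) of distinct elements of Ω with v ≠ v_ℓ(1) and w ∉ {v_ℓ(1), v_ℓ(2)} — with its Haar probability measure (each factor discrete, product topology). Then the set of pairs (g, λ) for which the resulting 4-tuple (Ω, f, g, λ) is a Rado decorated graph has measure 1. -/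
/-!
Whether a vertex `w ∉ S` with `f w = n` solves a given extension problem over `S` is decided by
a finite block of coordinates of the parameter group: the decoration of `w` and the free labels
between `w` and `S`. Blocks of distinct vertices are disjoint, so projecting onto the blocks of
`N` such vertices is a surjective homomorphism onto a finite group; it pushes the Haar measure
forward to the uniform measure, and all `N` vertices fail with probability `(1 - 1/T)^N`, `T`
the size of a block. Since `f⁻¹(n)` is infinite, every problem is solved almost surely, and
there are only countably many problems once the prescribed labels are read as functions on `S`.

Residues mod `ℓ^n` are encoded as natural numbers `< ℓ^n`; an element of
`(ℤ/ℓ^n)^×` is a natural number `< ℓ^n` not divisible by `ℓ`.  The isomorphism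
`log_ℓ` is encoded by the function `lg : ℤ_ℓ → ℤ_ℓ`, `lg x = log_ℓ (1 + ℓx)`.
-/

noncomputable section

open scoped Classical ENat

section Param

variable (ℓ : ℕ) [Fact ℓ.Prime] (lg : ℤ_[ℓ] → ℤ_[ℓ])
variable (Ω : Type) (f : Ω → ℕ∞) (v1 v2 : Ω)

/-- The compact parameter group of pairs `(g, λ)`: the product of
`∏_{v ∈ Ω_fin} (ℤ/ℓ^{f v})^×` and of `∏_{(v,w)} ℤ/ℓ^{f(v,w)}` over the ordered pairs
`(v,w)` of distinct elements with `v ≠ v_ℓ(1)` and `w ∉ {v_ℓ(1), v_ℓ(2)}`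
(each factor discrete, product topology). -/
abbrev Param : Type :=
  ((v : {v : Ω // f v ≠ ⊤}) → (ZMod (ℓ ^ (f v.1).toNat))ˣ) ×
  ((p : {p : Ω × Ω // p.1 ≠ p.2 ∧ p.1 ≠ v1 ∧ p.2 ≠ v1 ∧ p.2 ≠ v2}) →
    Multiplicative (ZMod (ℓ ^ (min (f p.1.1) (f p.1.2)).toNat)))

/-- The decoration `g` determined by a parameter point. -/
def gOf (x : Param ℓ Ω f v1 v2) (v : Ω) : ℕ :=
  if h : f v ≠ ⊤ then ((x.1 ⟨v, h⟩ : ZMod (ℓ ^ (f v).toNat))).val else 0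

/-- The decorated graph determined by a parameter point: the labels not indexed by
the parameter group are the forced ones (`λ(v_ℓ(1), w)` is the prescribed logarithm
and `λ(w, v_ℓ(i)) = 0`). -/
def dataOf (x : Param ℓ Ω f v1 v2) : GraphData where
  Ω := Ω
  f := f
  v1 := v1
  v2 := v2
  g := gOf ℓ Ω f v1 v2 x
  lab := fun v w =>
    if h : v ≠ w ∧ v ≠ v1 ∧ w ≠ v1 ∧ w ≠ v2 then
      (Multiplicative.toAdd (x.2 ⟨(v, w), h⟩)).val
    else if v = v1 ∧ f w ≠ ⊤ then
      logVal ℓ lg (f w).toNat ((gOf ℓ Ω f v1 v2 x w : ℤ_[ℓ]))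
    else 0

end Param

open MeasureTheory

section HaarFibers

variable {G H : Type*} [Group G] [MeasurableSpace G] [MeasurableMul G] {μ : Measure G}
  [μ.IsMulLeftInvariant] [Group H]

theorem measure_preimage_singleton_eq_of_surjective {π : G →* H}
    (hπ : Function.Surjective π) (h h' : H) : μ (π ⁻¹' {h}) = μ (π ⁻¹' {h'}) := by
  obtain ⟨g, hg⟩ := hπ (h' * h⁻¹)
  have htranslate : (g * ·) ⁻¹' (π ⁻¹' {h'}) = π ⁻¹' {h} := by
    ext x
    simp [hg, mul_assoc, eq_inv_mul_iff_mul_eq, eq_comm]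
  rw [← htranslate, measure_preimage_mul]

theorem measure_preimage_eq_card_div [IsProbabilityMeasure μ] [Finite H] {π : G →* H}
    (hπ : Function.Surjective π) (hmeas : ∀ h, MeasurableSet (π ⁻¹' {h})) (C : Set H) :
    μ (π ⁻¹' C) = Nat.card C / Nat.card H := by
  classical
  have : Fintype H := Fintype.ofFinite H
  have hsum (s : Finset H) : μ (π ⁻¹' s) = s.card * μ (π ⁻¹' {1}) := by
    rw [← sum_measure_preimage_singleton s fun h _ => hmeas h,
      Finset.sum_congr rfl fun h _ => measure_preimage_singleton_eq_of_surjective hπ h 1,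
      Finset.sum_const, nsmul_eq_mul]
  have hone : μ (π ⁻¹' {1}) * Nat.card H = 1 := by
    rw [mul_comm, Nat.card_eq_fintype_card, ← Finset.card_univ, ← hsum, Finset.coe_univ,
      Set.preimage_univ, measure_univ]
  rw [div_eq_mul_inv, ← ENNReal.eq_inv_of_mul_eq_one_left hone]
  simpa [Nat.card_eq_card_toFinset] using hsum C.toFinset

end HaarFibers

theorem Nat.card_subtype_forall_ne {ι : Type*} [Fintype ι] {β : ι → Type*}
    [∀ i, Finite (β i)] (t : ∀ i, β i) :
    Nat.card {y : ∀ i, β i // ∀ i, y i ≠ t i} = ∏ i, (Nat.card (β i) - 1) := by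
  rw [Nat.card_congr (Equiv.subtypePiEquivPi (p := fun i b => b ≠ t i)), Nat.card_pi]
  refine Finset.prod_congr rfl fun i _ => ?_
  have := Fintype.ofFinite (β i)
  rw [Nat.card_eq_fintype_card, Nat.card_eq_fintype_card]
  exact Set.card_ne_eq (t i)

theorem ZMod.not_dvd_val_unit {p k : ℕ} (hp : p.Prime) (hk : k ≠ 0) (u : (ZMod (p ^ k))ˣ) :
    ¬ p ∣ (u : ZMod (p ^ k)).val :=
  hp.coprime_iff_not_dvd.1
    ((Nat.coprime_pow_right_iff (Nat.pos_of_ne_zero hk) _ _).1 (ZMod.val_coe_unit_coprime u)).symm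

instance Finset.finite_subtype_mem_and {α : Type*} (S : Finset α) (P : α → Prop) :
    Finite {s // s ∈ S ∧ P s} :=
  (S.finite_toSet.inter_of_left {s | P s}).to_subtype

section ExtensionProblem

variable (ℓ : ℕ) [Fact ℓ.Prime] (lg : ℤ_[ℓ] → ℤ_[ℓ]) {Ω : Type} (f : Ω → ℕ∞) (v1 v2 : Ω)
  (S : Finset Ω) (n α : ℕ)

/-- The hypotheses of the Rado property: `μ₁ s` is the prescribed label `λ(v, s)` and `μ₂ s`
the prescribed label `λ(s, v)` of the sought vertex `v`. -/
structure IsExtensionProblem (μ₁ μ₂ : Ω → ℕ) : Prop where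
  v1_mem : v1 ∈ S
  v2_mem : v2 ∈ S
  one_le : 1 ≤ n
  lt_pow : α < ℓ ^ n
  not_dvd : ¬ ℓ ∣ α
  out_lt : ∀ s ∈ S, μ₁ s < ℓ ^ (min (n : ℕ∞) (f s)).toNat
  in_lt : ∀ s ∈ S, μ₂ s < ℓ ^ (min (n : ℕ∞) (f s)).toNat
  in_v1 : μ₂ v1 = logVal ℓ lg n (α : ℤ_[ℓ])
  out_v1 : μ₁ v1 = 0
  out_v2 : μ₁ v2 = 0

variable {ℓ lg f v1 v2 S n α}

theorem IsExtensionProblem.congr {μ₁ μ₂ ν₁ ν₂ : Ω → ℕ}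
    (h : IsExtensionProblem ℓ lg f v1 v2 S n α μ₁ μ₂) (h₁ : ∀ s ∈ S, μ₁ s = ν₁ s)
    (h₂ : ∀ s ∈ S, μ₂ s = ν₂ s) : IsExtensionProblem ℓ lg f v1 v2 S n α ν₁ ν₂ :=
  ⟨h.v1_mem, h.v2_mem, h.one_le, h.lt_pow, h.not_dvd, fun s hs => h₁ s hs ▸ h.out_lt s hs,
    fun s hs => h₂ s hs ▸ h.in_lt s hs, h₂ v1 h.v1_mem ▸ h.in_v1, h₁ v1 h.v1_mem ▸ h.out_v1,
    h₁ v2 h.v2_mem ▸ h.out_v2⟩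

end ExtensionProblem

namespace GraphData

variable (D : GraphData)

def IsExtension (S : Finset D.Ω) (n α : ℕ) (μ₁ μ₂ : D.Ω → ℕ) (v : D.Ω) : Prop :=
  v ∉ S ∧ D.f v = n ∧ D.g v = α ∧ ∀ s ∈ S, D.lab v s = μ₁ s ∧ D.lab s v = μ₂ s

variable {D}

theorem IsExtension.congr {S : Finset D.Ω} {n α : ℕ} {μ₁ μ₂ ν₁ ν₂ : D.Ω → ℕ} {v : D.Ω}
    (h : D.IsExtension S n α μ₁ μ₂ v) (h₁ : ∀ s ∈ S, μ₁ s = ν₁ s)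
    (h₂ : ∀ s ∈ S, μ₂ s = ν₂ s) : D.IsExtension S n α ν₁ ν₂ v :=
  ⟨h.1, h.2.1, h.2.2.1, fun s hs => ⟨(h.2.2.2 s hs).1.trans (h₁ s hs),
    (h.2.2.2 s hs).2.trans (h₂ s hs)⟩⟩

theorem isRado_of_forall_restrict {ℓ : ℕ} [Fact ℓ.Prime] {lg : ℤ_[ℓ] → ℤ_[ℓ]}
    (h : ∀ (S : Finset D.Ω) (n α : ℕ) (m₁ m₂ : S → ℕ),
      IsExtensionProblem ℓ lg D.f D.v1 D.v2 S n α (Function.extend Subtype.val m₁ 0)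
        (Function.extend Subtype.val m₂ 0) →
      ∃ v, D.IsExtension S n α (Function.extend Subtype.val m₁ 0)
        (Function.extend Subtype.val m₂ 0) v) :
    D.IsRado ℓ lg := by
  intro S hv1 hv2 n hn α hα hαℓ μ₁ μ₂ hb₁ hb₂ hlog hz₁ hz₂
  have hext (μ : D.Ω → ℕ) (s : D.Ω) (hs : s ∈ S) :
      μ s = Function.extend Subtype.val (fun s : S => μ s) 0 s :=
    (Subtype.val_injective.extend_apply (fun s : S => μ s) 0 ⟨s, hs⟩).symm
  obtain ⟨v, hv⟩ := h S n α (fun s => μ₁ s) (fun s => μ₂ s)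
    (IsExtensionProblem.congr ⟨hv1, hv2, hn, hα, hαℓ, hb₁, hb₂, hlog, hz₁, hz₂⟩
      (hext μ₁) (hext μ₂))
  exact ⟨v, hv.congr (fun s hs => (hext μ₁ s hs).symm) (fun s hs => (hext μ₂ s hs).symm)⟩

end GraphData

section DataOf

variable {ℓ : ℕ} {Ω : Type} {f : Ω → ℕ∞} {v1 v2 : Ω} (x : Param ℓ Ω f v1 v2)

theorem gOf_of_ne_top {v : Ω} (hv : f v ≠ ⊤) :
    gOf ℓ Ω f v1 v2 x v = (x.1 ⟨v, hv⟩ : ZMod (ℓ ^ (f v).toNat)).val :=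
  dif_pos hv

variable [Fact ℓ.Prime] {lg : ℤ_[ℓ] → ℤ_[ℓ]}

theorem dataOf_lab_of_ne {v w : Ω} (h : v ≠ w ∧ v ≠ v1 ∧ w ≠ v1 ∧ w ≠ v2) :
    (dataOf ℓ lg Ω f v1 v2 x).lab v w = (Multiplicative.toAdd (x.2 ⟨(v, w), h⟩)).val :=
  dif_pos h

theorem dataOf_lab_v1_left {w : Ω} (hw : f w ≠ ⊤) :
    (dataOf ℓ lg Ω f v1 v2 x).lab v1 w = logVal ℓ lg (f w).toNat (gOf ℓ Ω f v1 v2 x w) := by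
  simp [dataOf, hw]

theorem dataOf_lab_eq_zero {v w : Ω} (hv : v ≠ v1) (hw : w = v1 ∨ w = v2) :
    (dataOf ℓ lg Ω f v1 v2 x).lab v w = 0 := by
  have hw' : ¬ (v ≠ w ∧ v ≠ v1 ∧ w ≠ v1 ∧ w ≠ v2) := by tauto
  simp only [dataOf]
  rw [dif_neg hw', if_neg fun h => hv h.1]

theorem dataOf_lab_lt (hfv1 : f v1 = ⊤) (v w : Ω) :
    (dataOf ℓ lg Ω f v1 v2 x).lab v w < ℓ ^ (dataOf ℓ lg Ω f v1 v2 x).fm v w := by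
  simp only [dataOf, GraphData.fm]
  split_ifs with h₁ h₂
  · exact ZMod.val_lt _
  · rw [h₂.1, hfv1, min_eq_right le_top]
    exact ZMod.val_lt _
  · exact pow_pos (Fact.out : ℓ.Prime).pos _

theorem gOf_lt_and_not_dvd (hf1 : ∀ v, 1 ≤ f v) {v : Ω} (hv : f v ≠ ⊤) :
    gOf ℓ Ω f v1 v2 x v < ℓ ^ (f v).toNat ∧ ¬ ℓ ∣ gOf ℓ Ω f v1 v2 x v := by
  rw [gOf_of_ne_top x hv]
  refine ⟨ZMod.val_lt _, ZMod.not_dvd_val_unit Fact.out ?_ _⟩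
  rw [Ne, ENat.toNat_eq_zero, not_or]
  exact ⟨Order.one_le_iff_ne_zero.1 (hf1 v), hv⟩

theorem isDecorated_dataOf (hcount : Countable Ω) (hinf : Infinite Ω) (hf1 : ∀ v, 1 ≤ f v)
    (hne : v1 ≠ v2) (hfv1 : f v1 = ⊤) (hfv2 : f v2 = ⊤)
    (htop : ∀ v, f v = ⊤ → v = v1 ∨ v = v2) :
    (dataOf ℓ lg Ω f v1 v2 x).IsDecorated ℓ lg := by
  refine ⟨hcount, hinf, hf1, hne, hfv1, hfv2, htop, fun v hv => gOf_lt_and_not_dvd x hf1 hv,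
    fun v w _ => dataOf_lab_lt x hfv1 v w, fun w hw => dataOf_lab_v1_left x hw, fun w hw => ?_⟩
  have hw1 : w ≠ v1 := fun h => hw ((congrArg f h).trans hfv1)
  exact ⟨dataOf_lab_eq_zero x hw1 (.inl rfl), dataOf_lab_eq_zero x hw1 (.inr rfl)⟩

end DataOf

section CoordBlocks

variable (ℓ : ℕ) {Ω : Type} (f : Ω → ℕ∞) (v1 v2 : Ω) (S : Finset Ω)

/-- The labels `λ(w, v_ℓ(i))` and `λ(v_ℓ(1), w)` are forced, hence not coordinates. -/
abbrev CoordBlock (m : ℕ∞) : Type :=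
  (ZMod (ℓ ^ m.toNat))ˣ ×
  ((s : {s : Ω // s ∈ S ∧ s ≠ v1 ∧ s ≠ v2}) →
    Multiplicative (ZMod (ℓ ^ (min m (f s.1)).toNat))) ×
  ((s : {s : Ω // s ∈ S ∧ s ≠ v1}) → Multiplicative (ZMod (ℓ ^ (min (f s.1) m).toNat)))

variable {S} (hv1 : v1 ∈ S) (hv2 : v2 ∈ S) {V : Finset Ω} (hVS : ∀ w ∈ V, w ∉ S)
  (hVf : ∀ w ∈ V, f w ≠ ⊤)

def coordBlockProj : Param ℓ Ω f v1 v2 →* ((w : V) → CoordBlock ℓ f v1 v2 S (f w)) where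
  toFun x w :=
    (x.1 ⟨w, hVf w w.2⟩,
     fun s => x.2 ⟨(w, s), (ne_of_mem_of_not_mem s.2.1 (hVS w w.2)).symm,
       (ne_of_mem_of_not_mem hv1 (hVS w w.2)).symm, s.2.2⟩,
     fun s => x.2 ⟨(s, w), ne_of_mem_of_not_mem s.2.1 (hVS w w.2), s.2.2,
       (ne_of_mem_of_not_mem hv1 (hVS w w.2)).symm,
       (ne_of_mem_of_not_mem hv2 (hVS w w.2)).symm⟩)
  map_one' := rfl
  map_mul' _ _ := rfl

theorem coordBlockProj_surjective :
    Function.Surjective (coordBlockProj ℓ f v1 v2 hv1 hv2 hVS hVf) := by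
  intro y
  refine ⟨(fun u => if h : u.1 ∈ V then (y ⟨u.1, h⟩).1 else 1,
    fun p => if h : p.1.1 ∈ V ∧ p.1.2 ∈ S then (y ⟨p.1.1, h.1⟩).2.1 ⟨p.1.2, h.2, p.2.2.2⟩
      else if h : p.1.2 ∈ V ∧ p.1.1 ∈ S then (y ⟨p.1.2, h.1⟩).2.2 ⟨p.1.1, h.2, p.2.2.1⟩
      else 1), ?_⟩
  funext w
  refine Prod.ext (dif_pos w.2)
    (Prod.ext (funext fun s => dif_pos ⟨w.2, s.2.1⟩) (funext fun s => ?_))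
  exact (dif_neg fun h => hVS w w.2 h.2).trans (dif_pos ⟨w.2, s.2.1⟩)

theorem continuous_coordBlockProj : Continuous (coordBlockProj ℓ f v1 v2 hv1 hv2 hVS hVf) := by
  refine continuous_pi fun w => ?_
  refine ((continuous_apply _).comp continuous_fst).prodMk (.prodMk ?_ ?_) <;>
    exact continuous_pi fun s => (continuous_apply _).comp continuous_snd

variable [Fact ℓ.Prime] {lg : ℤ_[ℓ] → ℤ_[ℓ]} {n α : ℕ} {μ₁ μ₂ : Ω → ℕ}

def coordTarget (hα : ¬ ℓ ∣ α) (μ₁ μ₂ : Ω → ℕ) (m : ℕ∞) : CoordBlock ℓ f v1 v2 S m :=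
  (ZMod.unitOfCoprime α (((Nat.Prime.coprime_iff_not_dvd Fact.out).2 hα).symm.pow_right _),
    fun s => .ofAdd (μ₁ s.1 : ZMod _), fun s => .ofAdd (μ₂ s.1 : ZMod _))

theorem isExtension_of_coordBlockProj_eq (hP : IsExtensionProblem ℓ lg f v1 v2 S n α μ₁ μ₂)
    (x : Param ℓ Ω f v1 v2) (w : V) (hw : f w = n)
    (h : coordBlockProj ℓ f v1 v2 hv1 hv2 hVS hVf x w =
      coordTarget ℓ f v1 v2 hP.not_dvd μ₁ μ₂ (f w)) :
    (dataOf ℓ lg Ω f v1 v2 x).IsExtension S n α μ₁ μ₂ w.1 := by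
  simp only [coordBlockProj, coordTarget, MonoidHom.coe_mk, OneHom.coe_mk, Prod.ext_iff,
    funext_iff] at h
  obtain ⟨hdec, hout, hin⟩ := h
  have hwS := hVS w w.2
  have hw1 : (w : Ω) ≠ v1 := (ne_of_mem_of_not_mem hv1 hwS).symm
  have hw2 : (w : Ω) ≠ v2 := (ne_of_mem_of_not_mem hv2 hwS).symm
  have hmin (s : Ω) : (min (f w) (f s)).toNat = (min (n : ℕ∞) (f s)).toNat := by rw [hw]
  have hg : gOf ℓ Ω f v1 v2 x w = α := by
    rw [gOf_of_ne_top x (hVf w w.2), hdec, ZMod.coe_unitOfCoprime, hw, ENat.toNat_natCast,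
      ZMod.val_natCast_of_lt hP.lt_pow]
  refine ⟨hwS, hw, hg, fun s hs => ⟨?_, ?_⟩⟩
  · by_cases hs12 : s = v1 ∨ s = v2
    · rw [dataOf_lab_eq_zero x hw1 hs12]
      rcases hs12 with h | h <;> rw [h]
      exacts [hP.out_v1.symm, hP.out_v2.symm]
    · rw [not_or] at hs12
      rw [dataOf_lab_of_ne x ⟨(ne_of_mem_of_not_mem hs hwS).symm, hw1, hs12⟩,
        hout ⟨s, hs, hs12⟩, toAdd_ofAdd, hmin, ZMod.val_natCast_of_lt (hP.out_lt s hs)]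
  · by_cases hs1 : s = v1
    · rw [hs1, dataOf_lab_v1_left x (hVf w w.2), hg, hw, ENat.toNat_natCast, hP.in_v1]
    · rw [dataOf_lab_of_ne x ⟨ne_of_mem_of_not_mem hs hwS, hs1, hw1, hw2⟩, hin ⟨s, hs, hs1⟩,
        toAdd_ofAdd, min_comm, hmin, ZMod.val_natCast_of_lt (hP.in_lt s hs)]

end CoordBlocks

section Probability

variable {ℓ : ℕ} [Fact ℓ.Prime] {lg : ℤ_[ℓ] → ℤ_[ℓ]} {Ω : Type} {f : Ω → ℕ∞} {v1 v2 : Ω}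
  [MeasurableSpace (Param ℓ Ω f v1 v2)] [BorelSpace (Param ℓ Ω f v1 v2)]
  {μ : Measure (Param ℓ Ω f v1 v2)} [μ.IsMulLeftInvariant] [IsProbabilityMeasure μ]
  {S : Finset Ω} {n α : ℕ} {μ₁ μ₂ : Ω → ℕ}

theorem measure_not_exists_isExtension_le_pow (hfib : {v : Ω | f v = (n : ℕ∞)}.Infinite)
    (hP : IsExtensionProblem ℓ lg f v1 v2 S n α μ₁ μ₂) (N : ℕ) :
    μ {x | ¬ ∃ v, (dataOf ℓ lg Ω f v1 v2 x).IsExtension S n α μ₁ μ₂ v} ≤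
      (((Nat.card (CoordBlock ℓ f v1 v2 S n) - 1 : ℕ) : ENNReal) /
        Nat.card (CoordBlock ℓ f v1 v2 S n)) ^ N := by
  obtain ⟨V, hVsub, hVcard⟩ := (hfib.sdiff S.finite_toSet).exists_subset_card_eq N
  have hVS : ∀ w ∈ V, w ∉ S := fun w hw => (hVsub hw).2
  have hVn : ∀ w ∈ V, f w = n := fun w hw => (hVsub hw).1
  have hVf : ∀ w ∈ V, f w ≠ ⊤ := fun w hw => hVn w hw ▸ ENat.natCast_ne_top n
  set π := coordBlockProj ℓ f v1 v2 hP.v1_mem hP.v2_mem hVS hVf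
  set t := coordTarget ℓ f v1 v2 (S := S) hP.not_dvd μ₁ μ₂
  have hbad : {x | ¬ ∃ v, (dataOf ℓ lg Ω f v1 v2 x).IsExtension S n α μ₁ μ₂ v} ⊆
      π ⁻¹' {y | ∀ w, y w ≠ t (f w)} := fun x hx w hw =>
    hx ⟨w.1, isExtension_of_coordBlockProj_eq ℓ f v1 v2 _ _ hVS hVf hP x w (hVn w w.2) hw⟩
  have hcard (w : V) :
      Nat.card (CoordBlock ℓ f v1 v2 S (f w)) = Nat.card (CoordBlock ℓ f v1 v2 S n) := by
    rw [hVn w w.2]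
  calc _ ≤ μ (π ⁻¹' {y | ∀ w, y w ≠ t (f w)}) := measure_mono hbad
    _ = _ := measure_preimage_eq_card_div (coordBlockProj_surjective ℓ f v1 v2 _ _ hVS hVf)
        (fun y => (isClosed_singleton.preimage
          (continuous_coordBlockProj ℓ f v1 v2 _ _ hVS hVf)).measurableSet) _
    _ = _ := by
      rw [Set.coe_ofPred, Nat.card_subtype_forall_ne, Nat.card_pi]
      simp only [hcard, Finset.prod_const, Finset.card_univ, Fintype.card_coe, hVcard,
        Nat.cast_pow, div_eq_mul_inv, mul_pow, ENNReal.inv_pow]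

theorem ae_exists_isExtension (hfib : {v : Ω | f v = (n : ℕ∞)}.Infinite)
    (hP : IsExtensionProblem ℓ lg f v1 v2 S n α μ₁ μ₂) :
    ∀ᵐ x ∂μ, ∃ v, (dataOf ℓ lg Ω f v1 v2 x).IsExtension S n α μ₁ μ₂ v := by
  set T := Nat.card (CoordBlock ℓ f v1 v2 S n)
  have hT : 0 < T := Nat.card_pos
  have hr : ((T - 1 : ℕ) : ENNReal) / T < 1 := by
    rw [ENNReal.div_lt_iff (.inl (by exact_mod_cast hT.ne')) (.inl (ENNReal.natCast_ne_top _)),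
      one_mul]
    exact_mod_cast Nat.sub_lt hT one_pos
  rw [ae_iff]
  exact le_antisymm (ge_of_tendsto' (ENNReal.tendsto_pow_atTop_nhds_zero_of_lt_one hr)
    (measure_not_exists_isExtension_le_pow hfib hP)) bot_le

theorem ae_isRado_dataOf (hcount : Countable Ω)
    (hfib : ∀ n : ℕ, 1 ≤ n → {v : Ω | f v = (n : ℕ∞)}.Infinite) :
    ∀ᵐ x ∂μ, (dataOf ℓ lg Ω f v1 v2 x).IsRado ℓ lg := by
  have hrestrict : ∀ᵐ x ∂μ, ∀ (S : Finset Ω) (n α : ℕ) (m₁ m₂ : S → ℕ),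
      IsExtensionProblem ℓ lg f v1 v2 S n α (Function.extend Subtype.val m₁ 0)
        (Function.extend Subtype.val m₂ 0) →
      ∃ v, (dataOf ℓ lg Ω f v1 v2 x).IsExtension S n α (Function.extend Subtype.val m₁ 0)
        (Function.extend Subtype.val m₂ 0) v := by
    simp only [ae_all_iff, Filter.eventually_imp_distrib_left]
    exact fun S n α m₁ m₂ hP => ae_exists_isExtension (hfib n hP.one_le) hP
  exact hrestrict.mono fun x hx => GraphData.isRado_of_forall_restrict hx

end Probability

theorem statement8_general (ℓ : ℕ) [Fact ℓ.Prime]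
    (lg : ℤ_[ℓ] → ℤ_[ℓ])
    (Ω : Type) (f : Ω → ℕ∞) (v1 v2 : Ω)
    (hcount : Countable Ω) (hinf : Infinite Ω)
    (hf1 : ∀ v, 1 ≤ f v) (hne : v1 ≠ v2) (hfv1 : f v1 = ⊤) (hfv2 : f v2 = ⊤)
    (htop : ∀ v, f v = ⊤ → v = v1 ∨ v = v2)
    (hfib : ∀ n : ℕ, 1 ≤ n → {v : Ω | f v = (n : ℕ∞)}.Infinite)
    [MeasurableSpace (Param ℓ Ω f v1 v2)] [BorelSpace (Param ℓ Ω f v1 v2)]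
    (μ : MeasureTheory.Measure (Param ℓ Ω f v1 v2))
    (hμ : μ.IsHaarMeasure) (hprob : MeasureTheory.IsProbabilityMeasure μ) :
    μ {x : Param ℓ Ω f v1 v2 |
        (dataOf ℓ lg Ω f v1 v2 x).IsDecorated ℓ lg ∧
        (dataOf ℓ lg Ω f v1 v2 x).IsRado ℓ lg} = 1 := by
  have hgood : ∀ᵐ x ∂μ, (dataOf ℓ lg Ω f v1 v2 x).IsDecorated ℓ lg ∧
      (dataOf ℓ lg Ω f v1 v2 x).IsRado ℓ lg :=
    (ae_isRado_dataOf hcount hfib).mono fun x hRado =>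
      ⟨isDecorated_dataOf x hcount hinf hf1 hne hfv1 hfv2 htop, hRado⟩
  refine (measure_congr ?_).trans measure_univ
  exact ae_eq_univ.2 (ae_iff.1 hgood)

theorem statement8 (ℓ : ℕ) [Fact ℓ.Prime] (hodd : Odd ℓ)
    (lg : ℤ_[ℓ] → ℤ_[ℓ]) (hlg : IsLogIso ℓ lg)
    (Ω : Type) (f : Ω → ℕ∞) (v1 v2 : Ω)
    (hcount : Countable Ω) (hinf : Infinite Ω)
    (hf1 : ∀ v, 1 ≤ f v) (hne : v1 ≠ v2) (hfv1 : f v1 = ⊤) (hfv2 : f v2 = ⊤)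
    (htop : ∀ v, f v = ⊤ → v = v1 ∨ v = v2)
    (hfib : ∀ n : ℕ, 1 ≤ n → {v : Ω | f v = (n : ℕ∞)}.Infinite)
    [MeasurableSpace (Param ℓ Ω f v1 v2)] [BorelSpace (Param ℓ Ω f v1 v2)]
    (μ : MeasureTheory.Measure (Param ℓ Ω f v1 v2))
    (hμ : μ.IsHaarMeasure) (hprob : MeasureTheory.IsProbabilityMeasure μ) :
    μ {x : Param ℓ Ω f v1 v2 |
        (dataOf ℓ lg Ω f v1 v2 x).IsDecorated ℓ lg ∧
        (dataOf ℓ lg Ω f v1 v2 x).IsRado ℓ lg} = 1 :=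
  statement8_general ℓ lg Ω f v1 v2 hcount hinf hf1 hne hfv1 hfv2 htop hfib μ hμ hprob
end
end

section
/- Let (Ω, f, g, λ) and (Ω', f', g', λ') be Rado decorated graphs and let φ : Ω → Ω' be an isomorphism of decorated graphs. Then φ(v_ℓ(1)) = v_ℓ(1)' and φ(v_ℓ(2)) = v_ℓ(2)', i.e. φ preserves the indexing of the two elements of the fiber of f over ∞. -/
/-!
Statement 9: An isomorphism between two Rado decorated graphs (for an odd prime
`ℓ`) preserves the indexing of the two distinguished vertices `v_ℓ(1)`, `v_ℓ(2)`.

Residues mod `ℓ^n` are encoded as natural numbers `< ℓ^n`; an element of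
`(ℤ/ℓ^n)^×` is a natural number `< ℓ^n` not divisible by `ℓ`.  The isomorphism
`log_ℓ` is encoded by the function `lg : ℤ_ℓ → ℤ_ℓ`, `lg x = log_ℓ (1 + ℓx)`.
-/

noncomputable section

open scoped Classical ENat

/-!
The label `λ(v_ℓ(1), w)` of an edge leaving `v_ℓ(1)` is determined by `f(w)` and `g(w)`,
and an isomorphism preserves `f`, `g` and the labels. So if `φ` swapped the two vertices over
`∞`, every label `λ'(v_ℓ(2)', w')` would be forced in the same way. The Rado property of the
target refutes this: it produces a vertex `w'` with `f'(w') = g'(w') = 1` whose label from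
`v_ℓ(2)'` is any prescribed residue mod `ℓ`, in particular one other than the forced value.
-/

theorem Nat.exists_lt_ne_of_one_lt {n : ℕ} (hn : 1 < n) (a : ℕ) : ∃ c < n, c ≠ a :=
  ⟨if a = 0 then 1 else 0, by split_ifs <;> omega, by split_ifs <;> omega⟩

namespace GraphData

variable {ℓ : ℕ} [Fact ℓ.Prime] {lg : ℤ_[ℓ] → ℤ_[ℓ]} {D : GraphData}

theorem IsDecorated.v1_ne_v2 (hD : D.IsDecorated ℓ lg) : D.v1 ≠ D.v2 :=
  hD.2.2.2.1

theorem IsDecorated.f_v1 (hD : D.IsDecorated ℓ lg) : D.f D.v1 = ⊤ :=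
  hD.2.2.2.2.1

theorem IsDecorated.f_v2 (hD : D.IsDecorated ℓ lg) : D.f D.v2 = ⊤ :=
  hD.2.2.2.2.2.1

theorem IsDecorated.eq_v1_or_eq_v2 (hD : D.IsDecorated ℓ lg) {v : D.Ω} (hv : D.f v = ⊤) :
    v = D.v1 ∨ v = D.v2 :=
  hD.2.2.2.2.2.2.1 v hv

theorem IsDecorated.lab_v1 (hD : D.IsDecorated ℓ lg) {w : D.Ω} (hw : D.f w ≠ ⊤) :
    D.lab D.v1 w = logVal ℓ lg (D.f w).toNat (D.g w : ℤ_[ℓ]) :=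
  hD.2.2.2.2.2.2.2.2.2.1 w hw

theorem IsRado.exists_lab_v2_ne_logVal (hR : D.IsRado ℓ lg) (hD : D.IsDecorated ℓ lg) :
    ∃ w, D.f w ≠ ⊤ ∧ D.lab D.v2 w ≠ logVal ℓ lg (D.f w).toNat (D.g w : ℤ_[ℓ]) := by
  have hℓ : 1 < ℓ ^ 1 := by simpa using (Fact.out : ℓ.Prime).one_lt
  set L := logVal ℓ lg 1 ((1 : ℕ) : ℤ_[ℓ])
  have hL : L < ℓ ^ 1 := ZMod.val_lt _
  obtain ⟨c, hcℓ, hcL⟩ := Nat.exists_lt_ne_of_one_lt hℓ L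
  have hS : ∀ s ∈ ({D.v1, D.v2} : Finset D.Ω), (min ((1 : ℕ) : ℕ∞) (D.f s)).toNat = 1 := by
    simp only [Finset.mem_insert, Finset.mem_singleton]
    rintro s (rfl | rfl) <;> simp [hD.f_v1, hD.f_v2]
  obtain ⟨w, -, hfw, hgw, hlab⟩ :=
    hR {D.v1, D.v2} (by simp) (by simp) 1 le_rfl 1 hℓ (Nat.Prime.not_dvd_one Fact.out)
      (fun _ => 0) (fun s => if s = D.v1 then L else c)
      (fun _ _ => by simp [Nat.Prime.pos Fact.out])
      (fun s hs => by rw [hS s hs]; split_ifs <;> assumption)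
      (by simp [L]) rfl rfl
  refine ⟨w, by simp [hfw], ?_⟩
  rw [(hlab D.v2 (by simp)).2, if_neg hD.v1_ne_v2.symm, hfw, hgw, ENat.toNat_natCast]
  exact hcL

end GraphData

namespace GraphIso

variable {ℓ : ℕ} [Fact ℓ.Prime] {lg : ℤ_[ℓ] → ℤ_[ℓ]} {D D' : GraphData}

theorem eq_v1_or_eq_v2 (e : GraphIso D D') (hD' : D'.IsDecorated ℓ lg) {v : D.Ω}
    (hv : D.f v = ⊤) : e.φ v = D'.v1 ∨ e.φ v = D'.v2 :=
  hD'.eq_v1_or_eq_v2 ((e.f_eq v).trans hv)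

theorem lab_eq_logVal_of_map_v1 (e : GraphIso D D') (hD : D.IsDecorated ℓ lg) {w : D'.Ω}
    (hw : D'.f w ≠ ⊤) : D'.lab (e.φ D.v1) w = logVal ℓ lg (D'.f w).toNat (D'.g w : ℤ_[ℓ]) := by
  obtain ⟨w, rfl⟩ := e.φ.surjective w
  rw [e.f_eq] at hw ⊢
  have hrel : D.Rel D.v1 w := ⟨fun h => hw (h ▸ hD.f_v1), fun h => hw h.2⟩
  rw [e.lab_eq _ _ hrel, e.g_eq w hw, hD.lab_v1 hw]

end GraphIso

theorem statement9_general (ℓ : ℕ) [Fact ℓ.Prime]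
    (lg : ℤ_[ℓ] → ℤ_[ℓ])
    (D D' : GraphData) (hD : D.IsDecorated ℓ lg) (hD' : D'.IsDecorated ℓ lg)
    (hRado' : D'.IsRado ℓ lg)
    (e : GraphIso D D') :
    e.φ D.v1 = D'.v1 ∧ e.φ D.v2 = D'.v2 := by
  have hv1 : e.φ D.v1 = D'.v1 := by
    refine (e.eq_v1_or_eq_v2 hD' hD.f_v1).resolve_right fun hswap => ?_
    obtain ⟨w, hw, hlab⟩ := hRado'.exists_lab_v2_ne_logVal hD'
    exact hlab (hswap ▸ e.lab_eq_logVal_of_map_v1 hD hw)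
  refine ⟨hv1, (e.eq_v1_or_eq_v2 hD' hD.f_v2).resolve_left fun h => ?_⟩
  exact hD.v1_ne_v2 (e.φ.injective (hv1.trans h.symm))

theorem statement9 (ℓ : ℕ) [Fact ℓ.Prime] (hodd : Odd ℓ)
    (lg : ℤ_[ℓ] → ℤ_[ℓ]) (hlg : IsLogIso ℓ lg)
    (D D' : GraphData) (hD : D.IsDecorated ℓ lg) (hD' : D'.IsDecorated ℓ lg)
    (hRado : D.IsRado ℓ lg) (hRado' : D'.IsRado ℓ lg)
    (e : GraphIso D D') :
    e.φ D.v1 = D'.v1 ∧ e.φ D.v2 = D'.v2 :=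
  statement9_general ℓ lg D D' hD hD' hRado' e
end
end

section
/- Let 𝒜 and ℬ be profinite abelian groups and let b : 𝒜 × 𝒜 → ℬ be a continuous ℤ-bilinear alternating map (i.e. b is biadditive and b(a,a) = 0 for all a ∈ 𝒜). Then there exists a unique continuous group homomorphism φ : ∧²_prof 𝒜 → ℬ such that b = φ ∘ b_univ(𝒜). -/
/-!
Statement 13: universal property of the profinite exterior square.  For profinite
abelian groups `𝒜`, `ℬ` and a continuous bilinear alternating map `b : 𝒜 × 𝒜 → ℬ`,
there is a unique continuous homomorphism `φ : ∧²_prof 𝒜 → ℬ` with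
`b = φ ∘ b_univ(𝒜)`.

Here `∧² M := (M ⊗_ℤ M)/⟨m ⊗ m⟩` and `∧²_prof 𝒜` is the inverse limit of the
groups `∧²(𝒜/U)` over the open subgroups `U` of `𝒜`, realized as the subgroup of
compatible families inside the product `∏_U ∧²(𝒜/U)` (each factor discrete).
-/

noncomputable section

open scoped TensorProduct

/-- The submodule of `M ⊗_ℤ M` generated by the elements `m ⊗ m`. -/
def wedgeRel (M : Type*) [AddCommGroup M] : Submodule ℤ (M ⊗[ℤ] M) :=
  Submodule.span ℤ {x | ∃ m : M, x = m ⊗ₜ[ℤ] m}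

/-- The exterior square `∧² M = (M ⊗_ℤ M)/⟨m ⊗ m⟩` of an abelian group. -/
def Wedge2 (M : Type*) [AddCommGroup M] : Type _ :=
  (M ⊗[ℤ] M) ⧸ wedgeRel M

instance (M : Type*) [AddCommGroup M] : AddCommGroup (Wedge2 M) :=
  inferInstanceAs (AddCommGroup ((M ⊗[ℤ] M) ⧸ wedgeRel M))

/-- In the profinite exterior square each factor `∧²(𝒜/U)` carries the discrete
topology. -/
instance (M : Type*) [AddCommGroup M] : TopologicalSpace (Wedge2 M) := ⊥

/-- `m ∧ m'`, the image of `m ⊗ m'` in `∧² M`. -/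
def wedge {M : Type*} [AddCommGroup M] (m m' : M) : Wedge2 M :=
  Submodule.Quotient.mk (m ⊗ₜ[ℤ] m')

/-- Functoriality of `∧²`. -/
def wedgeMap {M N : Type*} [AddCommGroup M] [AddCommGroup N] (f : M →+ N) :
    Wedge2 M →+ Wedge2 N :=
  (Submodule.mapQ (wedgeRel M) (wedgeRel N)
    (TensorProduct.map f.toIntLinearMap f.toIntLinearMap)
    (by
      rw [wedgeRel, Submodule.span_le]
      rintro x ⟨m, rfl⟩
      simp only [SetLike.mem_coe, Submodule.mem_comap, TensorProduct.map_tmul]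
      exact Submodule.subset_span ⟨f m, rfl⟩)).toAddMonoidHom

theorem wedgeMap_wedge {M N : Type*} [AddCommGroup M] [AddCommGroup N] (f : M →+ N)
    (m m' : M) : wedgeMap f (wedge m m') = wedge (f m) (f m') := by
  simp only [wedgeMap, wedge, LinearMap.toAddMonoidHom_coe, Submodule.mapQ_apply,
    TensorProduct.map_tmul]
  rfl

section Profinite

variable (A : Type*) [AddCommGroup A] [TopologicalSpace A]

/-- The open subgroups of `A`. -/
abbrev OpenSub : Type _ := {U : AddSubgroup A // IsOpen (U : Set A)}

/-- The transition map `∧²(A/U) → ∧²(A/V)` for `U ≤ V`. -/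
def transMap {U V : OpenSub A} (h : U.1 ≤ V.1) :
    Wedge2 (A ⧸ U.1) →+ Wedge2 (A ⧸ V.1) :=
  wedgeMap (QuotientAddGroup.map U.1 V.1 (AddMonoidHom.id A) (by simpa using h))

/-- The profinite exterior square `∧²_prof A = lim_U ∧²(A/U)`, as the subgroup of
compatible families in `∏_U ∧²(A/U)`. -/
def compatSub : AddSubgroup (∀ U : OpenSub A, Wedge2 (A ⧸ U.1)) where
  carrier := {x | ∀ (U V : OpenSub A) (h : U.1 ≤ V.1), transMap A h (x U) = x V}
  add_mem' := by
    intro a b ha hb U V h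
    simp only [Pi.add_apply, map_add, ha U V h, hb U V h]
  zero_mem' := by
    intro U V h
    simp only [Pi.zero_apply, map_zero]
  neg_mem' := by
    intro a ha U V h
    simp only [Pi.neg_apply, map_neg, ha U V h]

/-- The profinite exterior square, with the subspace topology of the product of the
(discrete) groups `∧²(A/U)`. -/
abbrev ProfWedge2 : Type _ := ↥(compatSub A)

/-- The universal continuous alternating map `b_univ : A × A → ∧²_prof A`,
`(a₁, a₂) ↦ a₁ ∧ a₂`. -/
def bUniv (a₁ a₂ : A) : ProfWedge2 A :=
  ⟨fun U => wedge ((a₁ : A ⧸ U.1)) ((a₂ : A ⧸ U.1)), by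
    intro U V h
    rw [transMap, wedgeMap_wedge]
    simp [QuotientAddGroup.map_mk]⟩

end Profinite

/-!
For an open subgroup `W` of `B`, compactness of `A` and continuity of `b` give an open subgroup
`U` of `A` with `b(U × A) ⊆ W` and `b(A × U) ⊆ W`, so `b` induces a homomorphism
`∧²(A/U) → B/W`. Composed with the projection of `∧²_prof A` onto `∧²(A/U)`, these form a
compatible family of continuous homomorphisms `∧²_prof A → B/W`, and since `B` is profinite,
`B = lim_W B/W` (compactness gives existence of the limit point, total disconnectedness its
uniqueness), so they glue to `φ`. Uniqueness of `φ` holds because the elements `a₁ ∧ a₂`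
generate a dense subgroup of `∧²_prof A`.
-/

namespace Wedge2

variable {M C : Type*} [AddCommGroup M] [AddCommGroup C]

def lift (f : M →+ M →+ C) (hf : ∀ m, f m m = 0) : Wedge2 M →+ C :=
  (Submodule.liftQ (wedgeRel M)
    (TensorProduct.liftAddHom f fun n m m' => by
      rw [map_zsmul, map_zsmul, AddMonoidHom.zsmul_apply]).toIntLinearMap
    (by
      rw [wedgeRel, Submodule.span_le]
      rintro _ ⟨m, rfl⟩
      exact hf m)).toAddMonoidHom

theorem closure_range_wedge :
    AddSubgroup.closure (Set.range fun p : M × M => wedge p.1 p.2) = ⊤ := by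
  rw [eq_top_iff]
  rintro x -
  obtain ⟨y, rfl⟩ := Submodule.Quotient.mk_surjective _ x
  induction y using TensorProduct.induction_on with
  | zero => exact zero_mem _
  | tmul m m' => exact AddSubgroup.subset_closure ⟨(m, m'), rfl⟩
  | add y z hy hz => exact add_mem hy hz

theorem closure_range_wedge_mk (U : AddSubgroup M) :
    AddSubgroup.closure (Set.range fun p : M × M => wedge (p.1 : M ⧸ U) (p.2 : M ⧸ U)) =
      ⊤ := by
  have hsurj : Function.Surjective (Prod.map ((↑) : M → M ⧸ U) ((↑) : M → M ⧸ U)) :=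
    QuotientAddGroup.mk_surjective.prodMap QuotientAddGroup.mk_surjective
  rw [← closure_range_wedge, ← hsurj.range_comp]
  rfl

theorem hom_ext_mk {U : AddSubgroup M} {g g' : Wedge2 (M ⧸ U) →+ C}
    (h : ∀ m m' : M, g (wedge (m : M ⧸ U) m') = g' (wedge (m : M ⧸ U) m')) : g = g' :=
  AddMonoidHom.eq_of_eqOn_dense (closure_range_wedge_mk U) fun _ ⟨p, hp⟩ => hp ▸ h p.1 p.2

end Wedge2

def QuotientAddGroup.lift₂ {M N C : Type*} [AddCommGroup M] [AddCommGroup N] [AddCommGroup C]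
    (U : AddSubgroup M) (V : AddSubgroup N) (f : M →+ N →+ C) (hU : ∀ u ∈ U, f u = 0)
    (hV : ∀ v ∈ V, ∀ m, f m v = 0) : M ⧸ U →+ N ⧸ V →+ C :=
  QuotientAddGroup.lift U
    (AddMonoidHom.mk' (fun m => QuotientAddGroup.lift V (f m) fun v hv => hV v hv m)
      fun m m' => by ext n; exact DFunLike.congr_fun (map_add f m m') n)
    fun u hu => by ext n; simp [hU u hu]

namespace AddMonoidHom

variable {A B : Type*} [AddCommGroup A] [AddCommGroup B] (β : A →+ A →+ B)

def bilinComap (W : AddSubgroup B) : AddSubgroup A where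
  carrier := {u | ∀ a, β u a ∈ W ∧ β a u ∈ W}
  add_mem' hu hu' a := by
    simpa only [map_add, add_apply] using
      ⟨add_mem (hu a).1 (hu' a).1, add_mem (hu a).2 (hu' a).2⟩
  zero_mem' a := by simpa only [map_zero, zero_apply] using ⟨zero_mem W, zero_mem W⟩
  neg_mem' hu a := by
    simpa only [map_neg, neg_apply] using ⟨neg_mem (hu a).1, neg_mem (hu a).2⟩

theorem bilinComap_mono {W W' : AddSubgroup B} (h : W ≤ W') :
    β.bilinComap W ≤ β.bilinComap W' :=
  fun _ hu a => ⟨h (hu a).1, h (hu a).2⟩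

open Filter Topology in
theorem isOpen_bilinComap [TopologicalSpace A] [IsTopologicalAddGroup A] [CompactSpace A]
    [TopologicalSpace B] (hβc : Continuous fun p : A × A => β p.1 p.2) {W : AddSubgroup B}
    (hW : IsOpen (W : Set B)) : IsOpen (β.bilinComap W : Set A) := by
  refine AddSubgroup.isOpen_of_mem_nhds _ (g := 0) ?_
  -- tube lemma: `A` is compact and `β` vanishes on `{0} × A` and `A × {0}`
  refine isCompact_univ.eventually_forall_of_forall_eventually (fun a _ => ?_) |>.mono
    fun u hu a => hu a (Set.mem_univ a)
  have hl : ∀ᶠ z : A × A in 𝓝 (0, a), β z.1 z.2 ∈ W :=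
    hβc.continuousAt (by simpa using hW.mem_nhds (zero_mem W))
  have hr : ∀ᶠ z : A × A in 𝓝 (0, a), β z.2 z.1 ∈ W :=
    (hβc.comp continuous_swap).continuousAt (by simpa using hW.mem_nhds (zero_mem W))
  exact hl.and hr

end AddMonoidHom

instance (M : Type*) [AddCommGroup M] : DiscreteTopology (Wedge2 M) :=
  ⟨rfl⟩

section WedgeQuotLift

variable {A B : Type*} [AddCommGroup A] [AddCommGroup B] (β : A →+ A →+ B)
  (hβ : ∀ a, β a a = 0)

def wedgeQuotLift {U : AddSubgroup A} {W : AddSubgroup B} (hUW : U ≤ β.bilinComap W) :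
    Wedge2 (A ⧸ U) →+ B ⧸ W :=
  Wedge2.lift
    (QuotientAddGroup.lift₂ U U (β.compr₂ (QuotientAddGroup.mk' W))
      (fun _ hu => AddMonoidHom.ext fun a => (QuotientAddGroup.eq_zero_iff _).mpr (hUW hu a).1)
      (fun _ hu a => (QuotientAddGroup.eq_zero_iff _).mpr (hUW hu a).2))
    fun m => QuotientAddGroup.induction_on m fun a =>
      (QuotientAddGroup.eq_zero_iff _).mpr ((hβ a).symm ▸ zero_mem W)

theorem wedgeQuotLift_wedge_mk {U : AddSubgroup A} {W : AddSubgroup B}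
    (hUW : U ≤ β.bilinComap W) (a c : A) :
    wedgeQuotLift β hβ hUW (wedge (a : A ⧸ U) c) = (β a c : B ⧸ W) :=
  rfl

theorem wedgeQuotLift_comp_transMap [TopologicalSpace A] {U V : OpenSub A} (hUV : U.1 ≤ V.1)
    {W : AddSubgroup B} (hV : V.1 ≤ β.bilinComap W) :
    (wedgeQuotLift β hβ hV).comp (transMap A hUV) = wedgeQuotLift β hβ (hUV.trans hV) :=
  Wedge2.hom_ext_mk fun a c => by
    rw [AddMonoidHom.comp_apply, transMap, wedgeMap_wedge]
    rfl

theorem map_comp_wedgeQuotLift {U : AddSubgroup A} {W W' : AddSubgroup B} (hWW' : W ≤ W')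
    (hU : U ≤ β.bilinComap W) :
    (QuotientAddGroup.map W W' (AddMonoidHom.id B) hWW').comp (wedgeQuotLift β hβ hU)
      = wedgeQuotLift β hβ (hU.trans (β.bilinComap_mono hWW')) :=
  Wedge2.hom_ext_mk fun _ _ => rfl

end WedgeQuotLift

theorem OpenSub.exists_le_of_finset {A : Type*} [AddCommGroup A] [TopologicalSpace A]
    (I : Finset (OpenSub A)) : ∃ U₀ : OpenSub A, ∀ U ∈ I, U₀.1 ≤ U.1 := by
  classical
  induction I using Finset.induction_on with
  | empty => exact ⟨⟨⊤, isOpen_univ⟩, by simp⟩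
  | insert U I _ ih =>
    obtain ⟨U₀, hU₀⟩ := ih
    refine ⟨⟨U₀.1 ⊓ U.1, U₀.2.inter U.2⟩, fun V hV => ?_⟩
    rcases Finset.mem_insert.mp hV with rfl | hV
    · exact inf_le_right
    · exact inf_le_left.trans (hU₀ V hV)

namespace ProfWedge2

variable {A : Type*} [AddCommGroup A] [TopologicalSpace A]

def proj (U : OpenSub A) : ProfWedge2 A →+ Wedge2 (A ⧸ U.1) :=
  (Pi.evalAddMonoidHom (fun U : OpenSub A => Wedge2 (A ⧸ U.1)) U).comp (compatSub A).subtype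

theorem transMap_proj {U V : OpenSub A} (h : U.1 ≤ V.1) (x : ProfWedge2 A) :
    transMap A h (proj U x) = proj V x :=
  x.2 U V h

theorem continuous_proj (U : OpenSub A) : Continuous (proj U) :=
  (continuous_apply U).comp continuous_subtype_val

theorem dense_closure_range_bUniv :
    Dense (AddSubgroup.closure (Set.range fun p : A × A => bUniv A p.1 p.2) :
      Set (ProfWedge2 A)) := by
  rw [dense_iff_inter_open]
  rintro O hO ⟨x, hxO⟩
  obtain ⟨O', hO', rfl⟩ := isOpen_induced_iff.mp hO
  obtain ⟨I, u, hIu, hsub⟩ := isOpen_pi_iff.mp hO' x.1 hxO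
  -- `O` constrains finitely many coordinates, all of them determined by the one at `U₀`
  obtain ⟨U₀, hU₀⟩ := OpenSub.exists_le_of_finset I
  have hsurj : (AddSubgroup.closure (Set.range fun p : A × A => bUniv A p.1 p.2)).map (proj U₀)
      = ⊤ := by
    rw [AddMonoidHom.map_closure, ← Set.range_comp]
    exact Wedge2.closure_range_wedge_mk U₀.1
  obtain ⟨y, hy, hyx⟩ :=
    (AddSubgroup.mem_map (f := proj U₀)).mp (hsurj ▸ AddSubgroup.mem_top (proj U₀ x))
  refine ⟨y, hsub fun U hU => ?_, hy⟩
  change proj U y ∈ u U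
  rw [← transMap_proj (hU₀ U hU), hyx, transMap_proj]
  exact (hIu U hU).2

theorem hom_ext {C : Type*} [AddCommGroup C] [TopologicalSpace C] [T2Space C]
    {ψ ψ' : ProfWedge2 A →+ C} (hψ : Continuous ψ) (hψ' : Continuous ψ')
    (h : ∀ a₁ a₂ : A, ψ (bUniv A a₁ a₂) = ψ' (bUniv A a₁ a₂)) : ψ = ψ' :=
  DFunLike.coe_injective <| Continuous.ext_on dense_closure_range_bUniv hψ hψ' <|
    AddMonoidHom.eqOn_closure fun _ ⟨p, hp⟩ => hp ▸ h p.1 p.2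

section LiftQuot

variable [IsTopologicalAddGroup A] [CompactSpace A] {B : Type*} [AddCommGroup B]
  [TopologicalSpace B] (β : A →+ A →+ B) (hβ : ∀ a, β a a = 0)
  (hβc : Continuous fun p : A × A => β p.1 p.2)

def liftQuot (W : OpenSub B) : ProfWedge2 A →+ B ⧸ W.1 :=
  (wedgeQuotLift β hβ (U := β.bilinComap W.1) le_rfl).comp
    (proj ⟨β.bilinComap W.1, β.isOpen_bilinComap hβc W.2⟩)

theorem liftQuot_bUniv (W : OpenSub B) (a₁ a₂ : A) :
    liftQuot β hβ hβc W (bUniv A a₁ a₂) = (β a₁ a₂ : B ⧸ W.1) :=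
  wedgeQuotLift_wedge_mk β hβ le_rfl a₁ a₂

theorem continuous_liftQuot (W : OpenSub B) : Continuous (liftQuot β hβ hβc W) :=
  (continuous_of_discreteTopology (f := wedgeQuotLift β hβ le_rfl)).comp (continuous_proj _)

theorem map_liftQuot {W W' : OpenSub B} (h : W.1 ≤ W'.1) (x : ProfWedge2 A) :
    QuotientAddGroup.map W.1 W'.1 (AddMonoidHom.id B) h (liftQuot β hβ hβc W x)
      = liftQuot β hβ hβc W' x := by
  let U : OpenSub A := ⟨_, β.isOpen_bilinComap hβc W.2⟩
  let U' : OpenSub A := ⟨_, β.isOpen_bilinComap hβc W'.2⟩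
  have hUU' : U.1 ≤ U'.1 := β.bilinComap_mono h
  have hmap := DFunLike.congr_fun (map_comp_wedgeQuotLift β hβ h le_rfl) (proj U x)
  have htrans := DFunLike.congr_fun
    (wedgeQuotLift_comp_transMap β hβ (V := U') hUU' le_rfl) (proj U x)
  rw [AddMonoidHom.comp_apply, transMap_proj] at htrans
  exact hmap.trans htrans.symm

end LiftQuot

end ProfWedge2

namespace OpenSub

variable {B : Type*} [AddCommGroup B] [TopologicalSpace B] [IsTopologicalAddGroup B]
  [CompactSpace B]

theorem exists_forall_mk_eq (y : ∀ W : OpenSub B, B ⧸ W.1)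
    (hy : ∀ (W W' : OpenSub B) (h : W.1 ≤ W'.1),
      QuotientAddGroup.map W.1 W'.1 (AddMonoidHom.id B) h (y W) = y W') :
    ∃ c : B, ∀ W : OpenSub B, (c : B ⧸ W.1) = y W := by
  let Z (W : OpenSub B) : Set B := (QuotientAddGroup.mk : B → B ⧸ W.1) ⁻¹' {y W}
  have hZ_closed (W : OpenSub B) : IsClosed (Z W) :=
    have := QuotientAddGroup.discreteTopology W.2
    (isClosed_discrete _).preimage QuotientAddGroup.continuous_mk
  have hZ_mono (W W' : OpenSub B) (h : W.1 ≤ W'.1) : Z W ⊆ Z W' := fun _ hc =>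
    (congrArg (QuotientAddGroup.map W.1 W'.1 (AddMonoidHom.id B) h) hc).trans (hy W W' h)
  have hZ_dir : Directed (· ⊇ ·) Z := fun W W' =>
    ⟨⟨W.1 ⊓ W'.1, W.2.inter W'.2⟩, hZ_mono _ W inf_le_left, hZ_mono _ W' inf_le_right⟩
  have : Nonempty (OpenSub B) := ⟨⟨⊤, isOpen_univ⟩⟩
  obtain ⟨c, hc⟩ := IsCompact.nonempty_iInter_of_directed_nonempty_isCompact_isClosed Z hZ_dir
    (fun W => QuotientAddGroup.mk_surjective (y W)) (fun W => (hZ_closed W).isCompact) hZ_closed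
  exact ⟨c, Set.mem_iInter.mp hc⟩

variable [TotallyDisconnectedSpace B]

theorem exists_subset {s : Set B} (hs : IsOpen s) (h0 : (0 : B) ∈ s) :
    ∃ W : OpenSub B, (W.1 : Set B) ⊆ s :=
  let ⟨H, hH⟩ := ProfiniteGrp.exist_openNormalAddSubgroup_sub_open_nhds_of_zero hs h0
  ⟨⟨H.toAddSubgroup, H.isOpen⟩, hH⟩

theorem eq_of_forall_mk_eq {c c' : B} (h : ∀ W : OpenSub B, (c : B ⧸ W.1) = c') : c = c' := by
  by_contra hne
  obtain ⟨W, hW⟩ := exists_subset (isOpen_compl_singleton (x := c - c'))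
    (Set.mem_compl_singleton_iff.mpr (sub_ne_zero.mpr hne).symm)
  exact hW (QuotientAddGroup.eq_iff_sub_mem.mp (h W)) rfl

theorem exists_addMonoidHom_forall_mk_eq {G : Type*} [AddCommGroup G]
    (Φ : ∀ W : OpenSub B, G →+ B ⧸ W.1)
    (hΦ : ∀ (W W' : OpenSub B) (h : W.1 ≤ W'.1) (x : G),
      QuotientAddGroup.map W.1 W'.1 (AddMonoidHom.id B) h (Φ W x) = Φ W' x) :
    ∃ φ : G →+ B, ∀ (W : OpenSub B) (x : G), (φ x : B ⧸ W.1) = Φ W x := by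
  choose φ hφ using fun x => exists_forall_mk_eq (fun W => Φ W x) fun W W' h => hΦ W W' h x
  refine ⟨AddMonoidHom.mk' φ fun x x' => eq_of_forall_mk_eq fun W => ?_, fun W x => hφ x W⟩
  rw [QuotientAddGroup.mk_add, hφ, hφ, hφ, map_add]

theorem continuous_of_forall_continuous_mk {X : Type*} [TopologicalSpace X] {f : X → B}
    (hf : ∀ W : OpenSub B, Continuous fun x => (f x : B ⧸ W.1)) : Continuous f := by
  refine continuous_iff_continuousAt.mpr fun x s hs => ?_
  obtain ⟨t, hts, ht, hxt⟩ := mem_nhds_iff.mp hs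
  obtain ⟨W, hW⟩ := exists_subset (ht.preimage (continuous_const_add (f x)))
    (by simpa using hxt)
  have := QuotientAddGroup.discreteTopology W.2
  refine Filter.mem_map.mpr <| Filter.mem_of_superset ((hf W).continuousAt.preimage_mem_nhds
    ((isOpen_discrete {(f x : B ⧸ W.1)}).mem_nhds rfl)) fun x' hx' => hts ?_
  simpa using hW (QuotientAddGroup.eq_iff_sub_mem.mp hx')

end OpenSub

theorem statement13_general
    (A : Type) [AddCommGroup A] [TopologicalSpace A] [IsTopologicalAddGroup A]
    [CompactSpace A]
    (B : Type) [AddCommGroup B] [TopologicalSpace B] [IsTopologicalAddGroup B]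
    [CompactSpace B] [TotallyDisconnectedSpace B]
    (b : A × A → B) (hcont : Continuous b)
    (hleft : ∀ a₁ a₂ c : A, b (a₁ + a₂, c) = b (a₁, c) + b (a₂, c))
    (hright : ∀ a c₁ c₂ : A, b (a, c₁ + c₂) = b (a, c₁) + b (a, c₂))
    (halt : ∀ a : A, b (a, a) = 0) :
    ∃! φ : ProfWedge2 A →+ B,
      Continuous ⇑φ ∧ ∀ a₁ a₂ : A, φ (bUniv A a₁ a₂) = b (a₁, a₂) := by
  let β : A →+ A →+ B :=
    AddMonoidHom.mk' (fun a => AddMonoidHom.mk' (fun c => b (a, c)) (hright a))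
      fun a a' => AddMonoidHom.ext (hleft a a')
  obtain ⟨φ, hφ⟩ := OpenSub.exists_addMonoidHom_forall_mk_eq
    (ProfWedge2.liftQuot β halt hcont) fun _ _ => ProfWedge2.map_liftQuot β halt hcont
  have hφ_cont : Continuous φ := OpenSub.continuous_of_forall_continuous_mk fun W => by
    simpa only [hφ] using ProfWedge2.continuous_liftQuot β halt hcont W
  have hφ_bUniv (a₁ a₂ : A) : φ (bUniv A a₁ a₂) = b (a₁, a₂) :=
    OpenSub.eq_of_forall_mk_eq fun W =>
      (hφ W _).trans (ProfWedge2.liftQuot_bUniv β halt hcont W a₁ a₂)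
  refine ⟨φ, ⟨hφ_cont, hφ_bUniv⟩, fun ψ ⟨hψ_cont, hψ_bUniv⟩ => ?_⟩
  exact ProfWedge2.hom_ext hψ_cont hφ_cont fun a₁ a₂ =>
    (hψ_bUniv a₁ a₂).trans (hφ_bUniv a₁ a₂).symm

theorem statement13
    (A : Type) [AddCommGroup A] [TopologicalSpace A] [IsTopologicalAddGroup A]
    [CompactSpace A] [T2Space A] [TotallyDisconnectedSpace A]
    (B : Type) [AddCommGroup B] [TopologicalSpace B] [IsTopologicalAddGroup B]
    [CompactSpace B] [T2Space B] [TotallyDisconnectedSpace B]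
    (b : A × A → B) (hcont : Continuous b)
    (hleft : ∀ a₁ a₂ c : A, b (a₁ + a₂, c) = b (a₁, c) + b (a₂, c))
    (hright : ∀ a c₁ c₂ : A, b (a, c₁ + c₂) = b (a, c₁) + b (a, c₂))
    (halt : ∀ a : A, b (a, a) = 0) :
    ∃! φ : ProfWedge2 A →+ B,
      Continuous ⇑φ ∧ ∀ a₁ a₂ : A, φ (bUniv A a₁ a₂) = b (a₁, a₂) :=
  statement13_general A B b hcont hleft hright halt
end
end

section
/- Let ℓ be a prime, let (Ω, ≤) be a countable totally ordered set, and let f : Ω → ℤ_{≥1} ∪ {∞} be a function; write ℤ/ℓ^∞ℤ := ℤ_ℓ and f(v,w) := min(f(v), f(w)). Set 𝒜 := ∏_{v ∈ Ω} ℤ/ℓ^{f(v)}ℤ with the product topology. Then the unique continuous homomorphism ψ_• : ∧²_prof 𝒜 → ∏_{v<w} ℤ/ℓ^{f(v,w)}ℤ satisfying ψ_•(x ∧ y) = (x_v·y_w − x_w·y_v mod ℓ^{f(v,w)})_{v<w} for all x, y ∈ 𝒜 (where x_v, y_v denote the coordinates reduced into ℤ/ℓ^{f(v,w)}ℤ)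 is an isomorphism of topological groups. -/
/-!
Statement 14: for `𝒜 = ∏_{v ∈ Ω} ℤ/ℓ^{f v}` (with `ℤ/ℓ^∞ := ℤ_ℓ`), the unique
continuous homomorphism `ψ_• : ∧²_prof 𝒜 → ∏_{v<w} ℤ/ℓ^{f(v,w)}` given on pure
wedges by the 2×2 determinant of the reduced coordinates is an isomorphism of
topological groups.

Here `∧² M := (M ⊗_ℤ M)/⟨m ⊗ m⟩` and `∧²_prof 𝒜` is the inverse limit of the
groups `∧²(𝒜/U)` over the open subgroups `U` of `𝒜`, realized as the subgroup of
compatible families inside the product `∏_U ∧²(𝒜/U)` (each factor discrete).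
-/

noncomputable section

open scoped TensorProduct

section Mc

variable (ℓ : ℕ) [Fact ℓ.Prime]

/-- `ℤ/ℓ^n ℤ` for `n ∈ ℕ∞`, with the convention `ℤ/ℓ^∞ ℤ := ℤ_ℓ`. -/
def Mc : ℕ∞ → Type :=
  ENat.recTopCoe ℤ_[ℓ] (fun k => ZMod (ℓ ^ k))

instance : ∀ n : ℕ∞, CommRing (Mc ℓ n) :=
  ENat.recTopCoe (inferInstanceAs (CommRing ℤ_[ℓ]))
    (fun k => inferInstanceAs (CommRing (ZMod (ℓ ^ k))))

instance : ∀ n : ℕ∞, TopologicalSpace (Mc ℓ n) :=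
  ENat.recTopCoe (inferInstanceAs (TopologicalSpace ℤ_[ℓ]))
    (fun k => inferInstanceAs (TopologicalSpace (ZMod (ℓ ^ k))))

/-- Reduction to the `∞` level (only meaningful from the `∞` level itself). -/
def redTop : ∀ m : ℕ∞, Mc ℓ m → Mc ℓ ⊤ :=
  ENat.recTopCoe id (fun _ _ => 0)

/-- Reduction from level `m` to the finite level `k ≤ m`. -/
def redCoe (k : ℕ) : ∀ m : ℕ∞, Mc ℓ m → Mc ℓ (k : ℕ∞) :=
  ENat.recTopCoe (fun x => PadicInt.toZModPow k x)
    (fun j x => (ZMod.cast (x : ZMod (ℓ ^ j)) : ZMod (ℓ ^ k)))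

/-- The reduction map `ℤ/ℓ^m ℤ → ℤ/ℓ^n ℤ` (for `n ≤ m`). -/
def red (m : ℕ∞) : ∀ n : ℕ∞, Mc ℓ m → Mc ℓ n :=
  ENat.recTopCoe (redTop ℓ m) (fun k => redCoe ℓ k m)

variable (Ω : Type) [LinearOrder Ω] (f : Ω → ℕ∞)

/-- The profinite abelian group `𝒜 = ∏_{v ∈ Ω} ℤ/ℓ^{f v} ℤ`. -/
abbrev A : Type := ∀ v : Ω, Mc ℓ (f v)

/-- The target group `∏_{v < w} ℤ/ℓ^{f(v,w)} ℤ`. -/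
abbrev T : Type := (p : {p : Ω × Ω // p.1 < p.2}) → Mc ℓ (min (f p.1.1) (f p.1.2))

/-- The family of 2×2 determinants
`(x_v·y_w − x_w·y_v mod ℓ^{f(v,w)})_{v<w}` of a pair `x, y ∈ 𝒜`, the coordinates
being reduced into `ℤ/ℓ^{f(v,w)} ℤ`. -/
def detF (x y : A ℓ Ω f) : T ℓ Ω f := fun p =>
  red ℓ (f p.1.1) (min (f p.1.1) (f p.1.2)) (x p.1.1) *
      red ℓ (f p.1.2) (min (f p.1.1) (f p.1.2)) (y p.1.2) -
    red ℓ (f p.1.2) (min (f p.1.1) (f p.1.2)) (x p.1.2) *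
      red ℓ (f p.1.1) (min (f p.1.1) (f p.1.2)) (y p.1.1)

end Mc

/-!
The subgroups `U(S, k) = {x | x_v ≡ 0 mod ℓ^{min(f v, k)} for v ∈ S}`, `S` finite, are open and
cofinal among the open subgroups of `𝒜`, so `∧²_prof 𝒜` is the limit of the finite groups
`∧²(𝒜/U(S, k))`. The quotient `𝒜/U(S, k)` is `⊕_{v ∈ S} ℤ/ℓ^{min(f v, k)} e_v`, hence
`∧²(𝒜/U(S, k)) ≅ ⊕_{v < w in S} ℤ/ℓ^{min(f(v,w), k)}` with basis `e_v ∧ e_w`, the coordinate at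
`(v, w)` being the determinant `x_v y_w - x_w y_v`. These isomorphisms are compatible as `(S, k)`
grows, and in the limit they give `ψ_•` and its inverse, `ℤ/ℓ^{f(v,w)}` being the limit of the
`ℤ/ℓ^{min(f(v,w), k)}`. Uniqueness holds because pure wedges generate a dense subgroup of
`∧²_prof 𝒜`.
-/

open Topology

section Wedge2API

variable {M N : Type*} [AddCommGroup M] [AddCommGroup N]

instance inst_s14 (M : Type*) [AddCommGroup M] : DiscreteTopology (Wedge2 M) := ⟨rfl⟩

theorem Wedge2.induction_on {P : Wedge2 M → Prop} (z : Wedge2 M) (h0 : P 0)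
    (hw : ∀ m n, P (wedge m n)) (hadd : ∀ a b, P a → P b → P (a + b)) : P z := by
  obtain ⟨t, rfl⟩ := Submodule.Quotient.mk_surjective _ z
  induction t using TensorProduct.induction_on with
  | zero => exact h0
  | tmul x y => exact hw x y
  | add x y hx hy => exact hadd _ _ hx hy

theorem Wedge2.addHom_ext {g h : Wedge2 M →+ N} (H : ∀ m n, g (wedge m n) = h (wedge m n)) :
    g = h := by
  ext z
  induction z using Wedge2.induction_on with
  | h0 => simp only [map_zero]
  | hw m n => exact H m n
  | hadd a b ha hb => rw [map_add, map_add, ha, hb]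

def wedgeHom : M →+ M →+ Wedge2 M :=
  AddMonoidHom.mk' (fun m => AddMonoidHom.mk' (wedge m) fun n n' =>
      congrArg (Submodule.Quotient.mk (p := wedgeRel M)) (TensorProduct.tmul_add m n n'))
    fun m m' => AddMonoidHom.ext fun n =>
      congrArg (Submodule.Quotient.mk (p := wedgeRel M)) (TensorProduct.add_tmul m m' n)

theorem wedgeHom_apply (m n : M) : wedgeHom m n = wedge m n := rfl

theorem wedge_self (m : M) : wedge m m = 0 :=
  (Submodule.Quotient.mk_eq_zero _).mpr (Submodule.subset_span ⟨m, rfl⟩)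

theorem AddMonoidHom.map_swap_of_alternating (b : M →+ M →+ N) (hb : ∀ m, b m m = 0)
    (m n : M) : b n m = -b m n := by
  have h := hb (m + n)
  simp only [map_add, AddMonoidHom.add_apply, hb, zero_add, add_zero] at h
  exact eq_neg_of_add_eq_zero_left h

theorem wedge_swap (m n : M) : wedge n m = -wedge m n :=
  wedgeHom.map_swap_of_alternating wedge_self m n

theorem wedge_nsmul_left (k : ℕ) (m n : M) : wedge (k • m) n = k • wedge m n := by
  rw [← wedgeHom_apply, map_nsmul, AddMonoidHom.nsmul_apply, wedgeHom_apply]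

theorem wedge_nsmul_right (k : ℕ) (m n : M) : wedge m (k • n) = k • wedge m n :=
  map_nsmul (wedgeHom m) k n

def wedgeLift (b : M →+ M →+ N) (hb : ∀ m, b m m = 0) : Wedge2 M →+ N :=
  ((wedgeRel M).liftQ
    (TensorProduct.lift ((addMonoidHomLequivInt ℤ).toAddMonoidHom.comp b).toIntLinearMap)
    ((Submodule.span_le).mpr (by rintro _ ⟨m, rfl⟩; exact hb m))).toAddMonoidHom

theorem wedgeLift_wedge (b : M →+ M →+ N) (hb : ∀ m, b m m = 0) (m n : M) :
    wedgeLift b hb (wedge m n) = b m n := rfl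

def wedgeLiftQuotient (b : M →+ M →+ N) (hb : ∀ m, b m m = 0) (V : AddSubgroup M)
    (hV : V ≤ b.ker) : Wedge2 (M ⧸ V) →+ N :=
  let b₁ : M ⧸ V →+ M →+ N := QuotientAddGroup.lift V b hV
  let b₂ : M ⧸ V →+ M ⧸ V →+ N := (QuotientAddGroup.lift V b₁.flip fun u hu => by
    ext x
    change b x u = 0
    rw [b.map_swap_of_alternating hb, (AddMonoidHom.mem_ker).mp (hV hu), AddMonoidHom.zero_apply,
      neg_zero]).flip
  wedgeLift b₂ fun x => by
    induction x using QuotientAddGroup.induction_on with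
    | _ x => exact hb x

theorem wedgeLiftQuotient_wedge_mk (b : M →+ M →+ N) (hb : ∀ m, b m m = 0)
    (V : AddSubgroup M) (hV : V ≤ b.ker) (x y : M) :
    wedgeLiftQuotient b hb V hV (wedge (x : M ⧸ V) (y : M ⧸ V)) = b x y := by
  unfold wedgeLiftQuotient
  exact wedgeLift_wedge _ _ _ _

theorem Wedge2.addHom_ext_of_closure_eq_top {s : Set M} (hs : AddSubgroup.closure s = ⊤)
    {g h : Wedge2 M →+ N} (H : ∀ a ∈ s, ∀ b ∈ s, g (wedge a b) = h (wedge a b)) : g = h := by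
  have hleft : wedgeHom.compr₂ g = wedgeHom.compr₂ h :=
    AddMonoidHom.eq_of_eqOn_dense hs fun a ha =>
      AddMonoidHom.eq_of_eqOn_dense hs fun b hb => H a ha b hb
  exact Wedge2.addHom_ext fun m n => DFunLike.congr_fun (DFunLike.congr_fun hleft m) n

end Wedge2API

section ProfiniteWedge

variable {G : Type*} [AddCommGroup G] [TopologicalSpace G]

theorem transMap_wedge_mk {U V : OpenSub G} (h : U.1 ≤ V.1) (x y : G) :
    transMap G h (wedge (x : G ⧸ U.1) (y : G ⧸ U.1)) = wedge (x : G ⧸ V.1) (y : G ⧸ V.1) :=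
  wedgeMap_wedge _ _ _

theorem transMap_transMap {U V W : OpenSub G} (h : U.1 ≤ V.1) (h' : V.1 ≤ W.1)
    (z : Wedge2 (G ⧸ U.1)) : transMap G h' (transMap G h z) = transMap G (h.trans h') z := by
  induction z using Wedge2.induction_on with
  | h0 => simp only [map_zero]
  | hw x y =>
    induction x using QuotientAddGroup.induction_on
    induction y using QuotientAddGroup.induction_on
    simp only [transMap_wedge_mk]
  | hadd a b ha hb => simp only [map_add, ha, hb]

theorem dense_closure_range_bUniv :
    Dense (AddSubgroup.closure (Set.range fun p : G × G => bUniv G p.1 p.2) :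
      Set (ProfWedge2 G)) := by
  set W := AddSubgroup.closure (Set.range fun p : G × G => bUniv G p.1 p.2)
  refine dense_iff_inter_open.mpr fun O hO ⟨z, hzO⟩ => ?_
  obtain ⟨O', hO', rfl⟩ := isOpen_induced_iff.mp hO
  obtain ⟨I, u, hu, hsub⟩ := isOpen_pi_iff.mp hO' z.1 hzO
  let U₀ : OpenSub G := ⟨⨅ U ∈ I, U.1, by
    simpa only [AddSubgroup.coe_iInf] using isOpen_biInter_finset fun U _ => U.2⟩
  have hU₀ : ∀ U ∈ I, U₀.1 ≤ U.1 := fun U hU => iInf₂_le U hU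
  have hsurj : ∀ c, ∃ w ∈ W, w.1 U₀ = c := by
    intro c
    induction c using Wedge2.induction_on with
    | h0 => exact ⟨0, W.zero_mem, rfl⟩
    | hw x y =>
      induction x using QuotientAddGroup.induction_on with | _ x =>
      induction y using QuotientAddGroup.induction_on with | _ y =>
      exact ⟨bUniv G x y, AddSubgroup.subset_closure ⟨(x, y), rfl⟩, rfl⟩
    | hadd a b ha hb =>
      obtain ⟨wa, hwa, rfl⟩ := ha
      obtain ⟨wb, hwb, rfl⟩ := hb
      exact ⟨wa + wb, W.add_mem hwa hwb, rfl⟩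
  obtain ⟨w, hwW, hw⟩ := hsurj (z.1 U₀)
  refine ⟨w, hsub fun U hU => ?_, hwW⟩
  rw [← w.2 U₀ U (hU₀ U hU), hw, z.2 U₀ U (hU₀ U hU)]
  exact (hu U hU).2

theorem ProfWedge2.addHom_ext {N : Type*} [AddMonoid N] [TopologicalSpace N] [T2Space N]
    {g h : ProfWedge2 G →+ N} (hg : Continuous g) (hh : Continuous h)
    (H : ∀ x y, g (bUniv G x y) = h (bUniv G x y)) : g = h :=
  DFunLike.coe_injective <| hg.ext_on dense_closure_range_bUniv hh <|
    AddMonoidHom.eqOn_closure <| by rintro _ ⟨⟨x, y⟩, rfl⟩; exact H x y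

end ProfiniteWedge

namespace PadicInt

variable {p : ℕ} [Fact p.Prime]

theorem toZModPow_eq_iff_dist_le (k : ℕ) (x y : ℤ_[p]) :
    toZModPow k x = toZModPow k y ↔ dist x y ≤ (p : ℝ) ^ (-(k : ℤ)) := by
  rw [dist_eq_norm, norm_le_pow_iff_mem_span_pow, ← ker_toZModPow, RingHom.mem_ker, map_sub,
    sub_eq_zero]

theorem hasBasis_nhds_toZModPow (x : ℤ_[p]) :
    (𝓝 x).HasBasis (fun _ : ℕ => True) fun k => {y | toZModPow k y = toZModPow k x} := by
  refine Metric.nhds_basis_closedBall.to_hasBasis (fun ε hε => ?_) fun k _ =>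
    ⟨_, zpow_pos (by exact_mod_cast (Fact.out : p.Prime).pos) _, fun y hy =>
      (toZModPow_eq_iff_dist_le k y x).mpr hy⟩
  obtain ⟨k, hk⟩ := exists_pow_neg_lt p hε
  exact ⟨k, trivial, fun y hy =>
    Metric.mem_closedBall.mpr (((toZModPow_eq_iff_dist_le k y x).mp hy).trans hk.le)⟩

theorem continuous_toZModPow (k : ℕ) : Continuous (toZModPow (p := p) k) :=
  continuous_discrete_rng.mpr fun _ => isOpen_iff_mem_nhds.mpr fun x hx =>
    (hasBasis_nhds_toZModPow x).mem_of_superset (i := k) trivial fun _ hy => hy.trans hx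

theorem continuous_of_forall_continuous_toZModPow {X : Type*} [TopologicalSpace X]
    {g : X → ℤ_[p]} (h : ∀ k, Continuous fun x => toZModPow k (g x)) : Continuous g :=
  continuous_iff_continuousAt.mpr fun x => (hasBasis_nhds_toZModPow (g x)).tendsto_right_iff.mpr
    fun k _ => (h k).continuousAt.preimage_mem_nhds
      ((isOpen_discrete {toZModPow k (g x)}).mem_nhds rfl)

theorem exists_toZModPow_eq (c : ∀ k, ZMod (p ^ k))
    (hc : ∀ k k' (h : k ≤ k'), ZMod.castHom (pow_dvd_pow p h) _ (c k') = c k) :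
    ∃ x : ℤ_[p], ∀ k, toZModPow k x = c k := by
  have hdvd : ∀ i, (p : ℤ) ^ i ∣ ((c (i + 1)).val : ℤ) - (c i).val := fun i => by
    rw [← Nat.cast_pow, ← ZMod.intCast_eq_intCast_iff_dvd_sub, Int.cast_natCast, Int.cast_natCast,
      ZMod.natCast_zmod_val, ZMod.natCast_val,
      ← ZMod.castHom_apply (h := pow_dvd_pow p i.le_succ), hc i (i + 1) i.le_succ]
  refine ⟨ofIntSeq _ (isCauSeq_padicNorm_of_pow_dvd_sub (fun i => ((c i).val : ℤ)) p hdvd),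
    fun k => ?_⟩
  rw [toZModPow_ofIntSeq_of_pow_dvd_sub _ p hdvd, Int.cast_natCast, ZMod.natCast_zmod_val]

end PadicInt

namespace Mc

variable (ℓ : ℕ) [Fact ℓ.Prime]

instance (j : ℕ) : DiscreteTopology (Mc ℓ j) := inferInstanceAs (DiscreteTopology (ZMod (ℓ ^ j)))

instance (n : ℕ∞) : T2Space (Mc ℓ n) := by
  induction n using ENat.recTopCoe with
  | top => exact inferInstanceAs (T2Space ℤ_[ℓ])
  | coe j => exact inferInstanceAs (T2Space (ZMod (ℓ ^ j)))

def toZModPow {n : ℕ∞} (k : ℕ) (hk : (k : ℕ∞) ≤ n) : Mc ℓ n →+* ZMod (ℓ ^ k) :=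
  ENat.recTopCoe (C := fun n => (k : ℕ∞) ≤ n → Mc ℓ n →+* ZMod (ℓ ^ k))
    (fun _ => PadicInt.toZModPow k)
    (fun _ hk => ZMod.castHom (pow_dvd_pow ℓ (Nat.cast_le.mp hk)) _) n hk

variable {ℓ}

theorem toZModPow_self (j : ℕ) (x : Mc ℓ j) : toZModPow ℓ j le_rfl x = x :=
  DFunLike.congr_fun ZMod.castHom_self x

theorem castHom_toZModPow {n : ℕ∞} {k k' : ℕ} (h : k' ≤ k) (hk : (k : ℕ∞) ≤ n) (x : Mc ℓ n) :
    ZMod.castHom (pow_dvd_pow ℓ h) _ (toZModPow ℓ k hk x) =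
      toZModPow ℓ k' ((Nat.cast_le.mpr h).trans hk) x := by
  induction n using ENat.recTopCoe with
  | top => exact PadicInt.cast_toZModPow k' k h x
  | coe j =>
    exact DFunLike.congr_fun
      (ZMod.castHom_comp (pow_dvd_pow ℓ h) (pow_dvd_pow ℓ (Nat.cast_le.mp hk))) x

theorem red_coe_eq_toZModPow {m : ℕ∞} {j : ℕ} (h : (j : ℕ∞) ≤ m) (x : Mc ℓ m) :
    red ℓ m j x = toZModPow ℓ j h x := by
  induction m using ENat.recTopCoe with
  | top => rfl
  | coe i => rfl

theorem toZModPow_red {m n : ℕ∞} (hnm : n ≤ m) {k : ℕ} (hk : (k : ℕ∞) ≤ n) (x : Mc ℓ m) :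
    toZModPow ℓ k hk (red ℓ m n x) = toZModPow ℓ k (hk.trans hnm) x := by
  induction n using ENat.recTopCoe with
  | top => obtain rfl := top_le_iff.mp hnm; rfl
  | coe j => rw [red_coe_eq_toZModPow hnm]; exact castHom_toZModPow (Nat.cast_le.mp hk) hnm x

theorem ext {n : ℕ∞} {x y : Mc ℓ n}
    (h : ∀ k hk, toZModPow ℓ k hk x = toZModPow ℓ k hk y) : x = y := by
  induction n using ENat.recTopCoe with
  | top => exact PadicInt.ext_of_toZModPow.mp fun k => h k le_top
  | coe j =>
    have hj := h j le_rfl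
    rwa [toZModPow_self, toZModPow_self] at hj

theorem exists_toZModPow_eq {n : ℕ∞} (c : ∀ k : ℕ, (k : ℕ∞) ≤ n → ZMod (ℓ ^ k))
    (hc : ∀ k k' (h : k ≤ k') hk', ZMod.castHom (pow_dvd_pow ℓ h) _ (c k' hk') =
      c k ((Nat.cast_le.mpr h).trans hk')) :
    ∃ x : Mc ℓ n, ∀ k hk, toZModPow ℓ k hk x = c k hk := by
  induction n using ENat.recTopCoe with
  | top =>
    obtain ⟨x, hx⟩ := PadicInt.exists_toZModPow_eq (fun k => c k le_top) fun k k' h => hc k k' h _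
    exact ⟨x, fun k _ => hx k⟩
  | coe j => exact ⟨c j le_rfl, fun k hk => hc k j (Nat.cast_le.mp hk) le_rfl⟩

theorem continuous_toZModPow {n : ℕ∞} (k : ℕ) (hk : (k : ℕ∞) ≤ n) :
    Continuous (toZModPow ℓ k hk) := by
  induction n using ENat.recTopCoe with
  | top => exact PadicInt.continuous_toZModPow k
  | coe j => exact continuous_of_discreteTopology

theorem continuous_of_forall_continuous_toZModPow {X : Type*} [TopologicalSpace X] {n : ℕ∞}
    {g : X → Mc ℓ n} (h : ∀ k hk, Continuous fun x => toZModPow ℓ k hk (g x)) : Continuous g := by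
  induction n using ENat.recTopCoe with
  | top => exact PadicInt.continuous_of_forall_continuous_toZModPow fun k => h k le_top
  | coe j =>
    have hj := h j le_rfl
    simp only [toZModPow_self] at hj
    exact hj

theorem exists_toZModPow_ker_subset {n : ℕ∞} {O : Set (Mc ℓ n)} (hO : IsOpen O) (h0 : 0 ∈ O) :
    ∃ k hk, {x | toZModPow ℓ k hk x = 0} ⊆ O := by
  induction n using ENat.recTopCoe with
  | top =>
    obtain ⟨k, -, hk⟩ := (PadicInt.hasBasis_nhds_toZModPow 0).mem_iff.mp (hO.mem_nhds h0)
    exact ⟨k, le_top, fun x hx => hk (hx.trans (map_zero _).symm)⟩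
  | coe j =>
    exact ⟨j, le_rfl, fun x hx => by rwa [show x = 0 from (toZModPow_self j x).symm.trans hx]⟩

end Mc

-- `min n k` is finite, so `toNat` never hits its junk value `toNat ⊤ = 0`.
def truncLevel (n : ℕ∞) (k : ℕ) : ℕ := (min n k).toNat

theorem coe_truncLevel (n : ℕ∞) (k : ℕ) : (truncLevel n k : ℕ∞) = min n k :=
  ENat.natCast_toNat (min_lt_of_right_lt (ENat.natCast_lt_top k)).ne

theorem truncLevel_le (n : ℕ∞) (k : ℕ) : (truncLevel n k : ℕ∞) ≤ n :=
  (coe_truncLevel n k).trans_le (min_le_left _ _)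

theorem truncLevel_le_right (n : ℕ∞) (k : ℕ) : truncLevel n k ≤ k :=
  Nat.cast_le.mp ((coe_truncLevel n k).trans_le (min_le_right _ _))

theorem le_truncLevel {n : ℕ∞} {m k : ℕ} (hm : (m : ℕ∞) ≤ n) (hmk : m ≤ k) : m ≤ truncLevel n k :=
  Nat.cast_le.mp ((le_min hm (Nat.cast_le.mpr hmk)).trans_eq (coe_truncLevel n k).symm)

theorem truncLevel_min (n n' : ℕ∞) (k : ℕ) :
    truncLevel (min n n') k = min (truncLevel n k) (truncLevel n' k) := by
  apply Nat.cast_injective (R := ℕ∞)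
  rw [Nat.mono_cast.map_min, coe_truncLevel, coe_truncLevel, coe_truncLevel]
  exact inf_inf_distrib_right _ _ _

section CongruenceSubgroups

variable (ℓ : ℕ) [Fact ℓ.Prime] {Ω : Type} (f : Ω → ℕ∞)

local notation "𝒜" => A ℓ Ω f

def congrSubgroup (S : Finset Ω) (k : ℕ) : AddSubgroup 𝒜 :=
  AddSubgroup.pi S fun v => (Mc.toZModPow ℓ _ (truncLevel_le (f v) k)).toAddMonoidHom.ker

theorem isOpen_congrSubgroup (S : Finset Ω) (k : ℕ) :
    IsOpen (congrSubgroup ℓ f S k : Set 𝒜) := by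
  rw [congrSubgroup, AddSubgroup.coe_pi]
  exact isOpen_set_pi S.finite_toSet fun v _ =>
    (Mc.continuous_toZModPow _ _).isOpen_preimage {0} (isOpen_discrete _)

abbrev congrOpenSub (S : Finset Ω) (k : ℕ) : OpenSub 𝒜 :=
  ⟨congrSubgroup ℓ f S k, isOpen_congrSubgroup ℓ f S k⟩

variable {ℓ f}

theorem toZModPow_eq_zero_of_mem_congrSubgroup {S : Finset Ω} {k : ℕ} {x : 𝒜}
    (hx : x ∈ congrSubgroup ℓ f S k) {v : Ω} (hv : v ∈ S) {m : ℕ} (hmk : m ≤ k)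
    (hm : (m : ℕ∞) ≤ f v) : Mc.toZModPow ℓ m hm (x v) = 0 := by
  have hx₀ : Mc.toZModPow ℓ _ (truncLevel_le (f v) k) (x v) = 0 := (AddSubgroup.mem_pi _).mp hx v hv
  rw [← Mc.castHom_toZModPow (le_truncLevel hm hmk) (truncLevel_le _ _), hx₀, map_zero]

theorem mem_congrSubgroup_of_forall {S : Finset Ω} {k : ℕ} {x : 𝒜}
    (h : ∀ v ∈ S, ∀ m ≤ k, ∀ hm : (m : ℕ∞) ≤ f v, Mc.toZModPow ℓ m hm (x v) = 0) :
    x ∈ congrSubgroup ℓ f S k :=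
  (AddSubgroup.mem_pi _).mpr fun v hv => h v hv _ (truncLevel_le_right _ _) _

theorem congrSubgroup_anti {S S' : Finset Ω} {k k' : ℕ} (hS : S ⊆ S') (hk : k ≤ k') :
    congrSubgroup ℓ f S' k' ≤ congrSubgroup ℓ f S k := fun _ hx =>
  mem_congrSubgroup_of_forall fun _ hv _ hm _ =>
    toZModPow_eq_zero_of_mem_congrSubgroup hx (hS hv) (hm.trans hk) _

theorem exists_congrSubgroup_le (U : OpenSub 𝒜) : ∃ S k, congrSubgroup ℓ f S k ≤ U.1 := by
  obtain ⟨S, u, hu, hsub⟩ := isOpen_pi_iff.mp U.2 0 U.1.zero_mem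
  choose k hk hker using fun v (hv : v ∈ S) =>
    Mc.exists_toZModPow_ker_subset (hu v hv).1 (hu v hv).2
  refine ⟨S, S.attach.sup fun v => k v.1 v.2, fun x hx => hsub fun v hv => hker v hv ?_⟩
  exact toZModPow_eq_zero_of_mem_congrSubgroup hx hv
    (Finset.le_sup (f := fun v : S => k v.1 v.2) (Finset.mem_attach S ⟨v, hv⟩)) _

end CongruenceSubgroups

section Determinants

variable (ℓ : ℕ) [Fact ℓ.Prime] {Ω : Type} (f : Ω → ℕ∞)

local notation "𝒜" => A ℓ Ω f

def pairDet (p : Ω × Ω) (m : ℕ) (hm : (m : ℕ∞) ≤ min (f p.1) (f p.2)) :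
    𝒜 →+ 𝒜 →+ ZMod (ℓ ^ m) :=
  let r₁ : 𝒜 →+ ZMod (ℓ ^ m) := (Mc.toZModPow ℓ m (hm.trans (min_le_left _ _))).toAddMonoidHom.comp
    (Pi.evalAddMonoidHom _ p.1)
  let r₂ : 𝒜 →+ ZMod (ℓ ^ m) := (Mc.toZModPow ℓ m (hm.trans (min_le_right _ _))).toAddMonoidHom.comp
    (Pi.evalAddMonoidHom _ p.2)
  (AddMonoidHom.mul.comp r₁).compl₂ r₂ - (AddMonoidHom.mul.comp r₂).compl₂ r₁

variable {ℓ f} {p : Ω × Ω} {m : ℕ} (hm : (m : ℕ∞) ≤ min (f p.1) (f p.2))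

theorem pairDet_apply (x y : 𝒜) :
    pairDet ℓ f p m hm x y =
      Mc.toZModPow ℓ m (hm.trans (min_le_left _ _)) (x p.1) *
          Mc.toZModPow ℓ m (hm.trans (min_le_right _ _)) (y p.2) -
        Mc.toZModPow ℓ m (hm.trans (min_le_right _ _)) (x p.2) *
          Mc.toZModPow ℓ m (hm.trans (min_le_left _ _)) (y p.1) := rfl

theorem pairDet_self (x : 𝒜) : pairDet ℓ f p m hm x x = 0 := by
  rw [pairDet_apply, mul_comm, sub_self]

variable [DecidableEq Ω]

theorem congrSubgroup_le_ker_pairDet :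
    congrSubgroup ℓ f {p.1, p.2} m ≤ (pairDet ℓ f p m hm).ker := fun u hu => by
  ext y
  rw [AddMonoidHom.zero_apply, pairDet_apply,
    toZModPow_eq_zero_of_mem_congrSubgroup hu (Finset.mem_insert_self _ _) le_rfl,
    toZModPow_eq_zero_of_mem_congrSubgroup hu
      (Finset.mem_insert_of_mem (Finset.mem_singleton_self _)) le_rfl, zero_mul, zero_mul, sub_zero]

def wedgeDet (V : AddSubgroup 𝒜) (hV : V ≤ congrSubgroup ℓ f {p.1, p.2} m) :
    Wedge2 (𝒜 ⧸ V) →+ ZMod (ℓ ^ m) :=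
  wedgeLiftQuotient (pairDet ℓ f p m hm) (pairDet_self hm) V
    (hV.trans (congrSubgroup_le_ker_pairDet hm))

theorem wedgeDet_wedge_mk {V : AddSubgroup 𝒜} (hV : V ≤ congrSubgroup ℓ f {p.1, p.2} m)
    (x y : 𝒜) : wedgeDet hm V hV (wedge (x : 𝒜 ⧸ V) (y : 𝒜 ⧸ V)) = pairDet ℓ f p m hm x y :=
  wedgeLiftQuotient_wedge_mk _ _ _ _ _ _

theorem wedgeDet_transMap {U V : OpenSub 𝒜} (h : U.1 ≤ V.1)
    (hV : V.1 ≤ congrSubgroup ℓ f {p.1, p.2} m) (z : Wedge2 (𝒜 ⧸ U.1)) :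
    wedgeDet hm V.1 hV (transMap 𝒜 h z) = wedgeDet hm U.1 (h.trans hV) z := by
  induction z using Wedge2.induction_on with
  | h0 => simp only [map_zero]
  | hw x y =>
    induction x using QuotientAddGroup.induction_on
    induction y using QuotientAddGroup.induction_on
    rw [transMap_wedge_mk, wedgeDet_wedge_mk, wedgeDet_wedge_mk]
  | hadd a b ha hb => simp only [map_add, ha, hb]

theorem castHom_wedgeDet {m' : ℕ} (h : m' ≤ m) {V : AddSubgroup 𝒜}
    (hV : V ≤ congrSubgroup ℓ f {p.1, p.2} m) (z : Wedge2 (𝒜 ⧸ V)) :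
    ZMod.castHom (pow_dvd_pow ℓ h) _ (wedgeDet hm V hV z) =
      wedgeDet ((Nat.cast_le.mpr h).trans hm) V (hV.trans (congrSubgroup_anti subset_rfl h)) z := by
  induction z using Wedge2.induction_on with
  | h0 => simp only [map_zero]
  | hw x y =>
    induction x using QuotientAddGroup.induction_on
    induction y using QuotientAddGroup.induction_on
    simp only [wedgeDet_wedge_mk, pairDet_apply, map_sub, map_mul, Mc.castHom_toZModPow h]
  | hadd a b ha hb => simp only [map_add, ha, hb]

theorem wedgeDet_compat (z : ProfWedge2 𝒜) {U V : OpenSub 𝒜} (h : U.1 ≤ V.1)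
    (hV : V.1 ≤ congrSubgroup ℓ f {p.1, p.2} m) :
    wedgeDet hm V.1 hV (z.1 V) = wedgeDet hm U.1 (h.trans hV) (z.1 U) := by
  rw [← z.2 U V h, wedgeDet_transMap]

end Determinants

section Psi

variable {ℓ : ℕ} [Fact ℓ.Prime] {Ω : Type} [LinearOrder Ω] {f : Ω → ℕ∞}

local notation "𝒜" => A ℓ Ω f

def psiLevel (z : ProfWedge2 𝒜) (p : Ω × Ω) (m : ℕ) (hm : (m : ℕ∞) ≤ min (f p.1) (f p.2)) :
    ZMod (ℓ ^ m) :=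
  wedgeDet hm (congrOpenSub ℓ f {p.1, p.2} m).1 le_rfl (z.1 (congrOpenSub ℓ f {p.1, p.2} m))

theorem castHom_psiLevel (z : ProfWedge2 𝒜) (p : Ω × Ω) {m m' : ℕ} (h : m' ≤ m)
    (hm : (m : ℕ∞) ≤ min (f p.1) (f p.2)) :
    ZMod.castHom (pow_dvd_pow ℓ h) _ (psiLevel z p m hm) =
      psiLevel z p m' ((Nat.cast_le.mpr h).trans hm) := by
  rw [psiLevel, psiLevel, castHom_wedgeDet _ h]
  exact (wedgeDet_compat _ z (congrSubgroup_anti subset_rfl h) le_rfl).symm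

theorem exists_toZModPow_eq_psiLevel (z : ProfWedge2 𝒜) (p : Ω × Ω) :
    ∃ x : Mc ℓ (min (f p.1) (f p.2)), ∀ m hm, Mc.toZModPow ℓ m hm x = psiLevel z p m hm :=
  Mc.exists_toZModPow_eq (psiLevel z p) fun _ _ h _ => castHom_psiLevel z p h _

def psiCoord (z : ProfWedge2 𝒜) (p : Ω × Ω) : Mc ℓ (min (f p.1) (f p.2)) :=
  (exists_toZModPow_eq_psiLevel z p).choose

theorem toZModPow_psiCoord (z : ProfWedge2 𝒜) (p : Ω × Ω) {m : ℕ}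
    (hm : (m : ℕ∞) ≤ min (f p.1) (f p.2)) {U : OpenSub 𝒜}
    (hU : U.1 ≤ congrSubgroup ℓ f {p.1, p.2} m) :
    Mc.toZModPow ℓ m hm (psiCoord z p) = wedgeDet hm U.1 hU (z.1 U) := by
  rw [psiCoord, (exists_toZModPow_eq_psiLevel z p).choose_spec, psiLevel]
  exact wedgeDet_compat hm z hU le_rfl

variable (ℓ f) in
def psi : ProfWedge2 𝒜 →+ T ℓ Ω f :=
  AddMonoidHom.mk' (fun z p => psiCoord z p.1) fun z z' => funext fun p => Mc.ext fun m hm => by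
    simp only [Pi.add_apply, map_add, toZModPow_psiCoord _ _ hm (U := congrOpenSub ℓ f _ m) le_rfl]
    exact map_add _ (z.1 _) (z'.1 _)

theorem toZModPow_psi (z : ProfWedge2 𝒜) (p : {p : Ω × Ω // p.1 < p.2}) {m : ℕ}
    (hm : (m : ℕ∞) ≤ min (f p.1.1) (f p.1.2)) {U : OpenSub 𝒜}
    (hU : U.1 ≤ congrSubgroup ℓ f {p.1.1, p.1.2} m) :
    Mc.toZModPow ℓ m hm (psi ℓ f z p) = wedgeDet hm U.1 hU (z.1 U) :=
  toZModPow_psiCoord z p.1 hm hU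

theorem continuous_psi : Continuous (psi ℓ f) :=
  continuous_pi fun p => Mc.continuous_of_forall_continuous_toZModPow fun m hm => by
    simp only [toZModPow_psi _ p hm (U := congrOpenSub ℓ f _ m) le_rfl]
    exact continuous_of_discreteTopology.comp ((continuous_apply _).comp continuous_subtype_val)

theorem psi_bUniv (x y : 𝒜) : psi ℓ f (bUniv 𝒜 x y) = detF ℓ Ω f x y :=
  funext fun p => Mc.ext fun m hm => by
    rw [toZModPow_psi _ p hm (U := congrOpenSub ℓ f _ m) le_rfl]
    simp only [bUniv, wedgeDet_wedge_mk, pairDet_apply, detF, map_sub, map_mul,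
      Mc.toZModPow_red (min_le_left _ _), Mc.toZModPow_red (min_le_right _ _)]

end Psi

theorem ZMod.addMonoidHom_ext_one {n : ℕ} {M : Type*} [AddMonoid M] {g h : ZMod n →+ M}
    (H : g 1 = h 1) : g = h :=
  (AddMonoidHom.cancel_right (f := Int.castAddHom (ZMod n)) ZMod.intCast_surjective).mp <|
    AddMonoidHom.ext_int <| by
      change g ((1 : ℤ) : ZMod n) = h ((1 : ℤ) : ZMod n)
      rwa [Int.cast_one]

section FiniteLevel

variable {ℓ : ℕ} [Fact ℓ.Prime] {Ω : Type} [LinearOrder Ω] {f : Ω → ℕ∞}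

local notation "𝒜" => A ℓ Ω f

def pairs (S : Finset Ω) : Finset {p : Ω × Ω // p.1 < p.2} := (S ×ˢ S).subtype _

theorem mem_pairs {S : Finset Ω} {p : {p : Ω × Ω // p.1 < p.2}} :
    p ∈ pairs S ↔ p.1.1 ∈ S ∧ p.1.2 ∈ S := by
  rw [pairs, Finset.mem_subtype, Finset.mem_product]

variable (f) in
abbrev pairLevel (p : Ω × Ω) (k : ℕ) : ℕ := truncLevel (min (f p.1) (f p.2)) k

omit [LinearOrder Ω] in
theorem pairLevel_le (p : Ω × Ω) (k : ℕ) : (pairLevel f p k : ℕ∞) ≤ min (f p.1) (f p.2) :=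
  truncLevel_le _ _

theorem congrSubgroup_le_of_mem_pairs {S : Finset Ω} (k : ℕ) {q : {p : Ω × Ω // p.1 < p.2}}
    (hq : q ∈ pairs S) :
    congrSubgroup ℓ f S k ≤ congrSubgroup ℓ f {q.1.1, q.1.2} (pairLevel f q.1 k) :=
  congrSubgroup_anti (Finset.insert_subset_iff.mpr
    ⟨(mem_pairs.mp hq).1, Finset.singleton_subset_iff.mpr (mem_pairs.mp hq).2⟩)
    (truncLevel_le_right _ _)

theorem toZModPow_single (v w : Ω) {m : ℕ} (hm : (m : ℕ∞) ≤ f w) :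
    Mc.toZModPow ℓ m hm ((Pi.single v 1 : 𝒜) w) = if v = w then 1 else 0 := by
  rcases eq_or_ne v w with rfl | hvw
  · rw [Pi.single_eq_same, map_one, if_pos rfl]
  · rw [Pi.single_eq_of_ne' hvw, map_zero, if_neg hvw]

theorem pairDet_single_single {p : Ω × Ω} (hp : p.1 < p.2) {m : ℕ}
    (hm : (m : ℕ∞) ≤ min (f p.1) (f p.2)) {a b : Ω} (hab : a < b) :
    pairDet ℓ f p m hm (Pi.single a 1) (Pi.single b 1) = if (a, b) = p then 1 else 0 := by
  have hswap : ¬(a = p.2 ∧ b = p.1) := fun h => (h.1 ▸ h.2 ▸ hab).not_gt hp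
  rw [pairDet_apply]
  simp only [toZModPow_single, Prod.ext_iff]
  split_ifs <;> simp_all

variable (S : Finset Ω) (k : ℕ)

local notation "𝒰" => congrSubgroup ℓ f S k

def quotSingle (V : AddSubgroup 𝒜) (v : Ω) : 𝒜 ⧸ V := ((Pi.single v 1 : 𝒜) : 𝒜 ⧸ V)

theorem nsmul_quotSingle (v : Ω) : ℓ ^ truncLevel (f v) k • quotSingle 𝒰 v = 0 := by
  rw [quotSingle, ← QuotientAddGroup.mk_nsmul, QuotientAddGroup.eq_zero_iff]
  refine mem_congrSubgroup_of_forall fun w _ m hmk hm => ?_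
  rw [Pi.smul_apply, map_nsmul, toZModPow_single]
  split_ifs with hvw
  · subst hvw
    rw [nsmul_one, Nat.cast_pow, ← Nat.cast_pow, ZMod.natCast_eq_zero_iff]
    exact pow_dvd_pow ℓ (le_truncLevel hm hmk)
  · exact smul_zero _

theorem mk_eq_sum_quotSingle (x : 𝒜) :
    (x : 𝒜 ⧸ 𝒰) = ∑ v ∈ S, (Mc.toZModPow ℓ _ (truncLevel_le (f v) k) (x v)).val •
      quotSingle 𝒰 v := by
  simp only [quotSingle, ← QuotientAddGroup.mk_nsmul, ← QuotientAddGroup.mk_sum]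
  refine QuotientAddGroup.eq_iff_sub_mem.mpr (mem_congrSubgroup_of_forall fun w hw m hmk hm => ?_)
  rw [Pi.sub_apply, Finset.sum_apply]
  simp only [← Pi.single_smul, Finset.sum_pi_single, if_pos hw]
  rw [map_sub, map_nsmul, map_one, nsmul_one, ZMod.natCast_val,
    ← ZMod.castHom_apply (h := pow_dvd_pow ℓ (le_truncLevel hm hmk)),
    Mc.castHom_toZModPow (le_truncLevel hm hmk), sub_self]

theorem closure_quotSingle : AddSubgroup.closure (quotSingle 𝒰 '' S) = ⊤ := by
  refine eq_top_iff.mpr fun z _ => ?_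
  induction z using QuotientAddGroup.induction_on with | _ x =>
  rw [mk_eq_sum_quotSingle]
  exact AddSubgroup.sum_mem _ fun v hv =>
    AddSubgroup.nsmul_mem _ (AddSubgroup.subset_closure (Set.mem_image_of_mem _ hv)) _

theorem nsmul_wedge_quotSingle (a b : Ω) :
    ℓ ^ pairLevel f (a, b) k • wedge (quotSingle 𝒰 a) (quotSingle 𝒰 b) = 0 := by
  rw [pairLevel, truncLevel_min]
  rcases min_choice (truncLevel (f a) k) (truncLevel (f b) k) with h | h <;> rw [h]
  · rw [← wedge_nsmul_left, nsmul_quotSingle, ← wedgeHom_apply, map_zero,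
      AddMonoidHom.zero_apply]
  · rw [← wedge_nsmul_right, nsmul_quotSingle, ← wedgeHom_apply, map_zero]

variable (ℓ f) in
def levelDet : Wedge2 (𝒜 ⧸ 𝒰) →+ ∀ q : pairs S, ZMod (ℓ ^ pairLevel f q.1.1 k) :=
  AddMonoidHom.pi fun q => wedgeDet (pairLevel_le q.1.1 k) 𝒰 (congrSubgroup_le_of_mem_pairs k q.2)

theorem levelDet_apply (z : Wedge2 (𝒜 ⧸ 𝒰)) (q : pairs S) :
    levelDet ℓ f S k z q =
      wedgeDet (pairLevel_le q.1.1 k) 𝒰 (congrSubgroup_le_of_mem_pairs k q.2) z :=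
  rfl

theorem levelDet_wedge_quotSingle {a b : Ω} (ha : a ∈ S) (hb : b ∈ S) (hab : a < b) :
    levelDet ℓ f S k (wedge (quotSingle 𝒰 a) (quotSingle 𝒰 b)) =
      Pi.single ⟨⟨(a, b), hab⟩, mem_pairs.mpr ⟨ha, hb⟩⟩ 1 := by
  funext q
  rw [levelDet_apply, quotSingle, quotSingle, wedgeDet_wedge_mk, pairDet_single_single q.1.2 _ hab]
  rcases eq_or_ne q ⟨⟨(a, b), hab⟩, mem_pairs.mpr ⟨ha, hb⟩⟩ with rfl | hq
  · rw [Pi.single_eq_same, if_pos rfl]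
  · rw [Pi.single_eq_of_ne hq, if_neg fun h => hq (Subtype.ext (Subtype.ext h.symm))]

variable (ℓ f) in
def levelGen : (∀ q : pairs S, ZMod (ℓ ^ pairLevel f q.1.1 k)) →+ Wedge2 (𝒜 ⧸ 𝒰) :=
  ∑ q : pairs S,
    (ZMod.lift _ ⟨zmultiplesHom _ (wedge (quotSingle 𝒰 q.1.1.1) (quotSingle 𝒰 q.1.1.2)), by
      rw [zmultiplesHom_apply, natCast_zsmul]; exact nsmul_wedge_quotSingle S k _ _⟩).comp
      (Pi.evalAddMonoidHom _ q)

theorem levelGen_single_one (q : pairs S) :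
    levelGen ℓ f S k (Pi.single q 1) = wedge (quotSingle 𝒰 q.1.1.1) (quotSingle 𝒰 q.1.1.2) := by
  rw [levelGen, AddMonoidHom.finsetSum_apply, Finset.sum_eq_single_of_mem q (Finset.mem_univ q)]
  · rw [AddMonoidHom.comp_apply, Pi.evalAddMonoidHom_apply, Pi.single_eq_same, ← Int.cast_one,
      ZMod.lift_coe, zmultiplesHom_apply, one_zsmul]
  · intro q' _ hq'
    rw [AddMonoidHom.comp_apply, Pi.evalAddMonoidHom_apply, Pi.single_eq_of_ne hq', map_zero]

theorem levelDet_comp_levelGen : (levelDet ℓ f S k).comp (levelGen ℓ f S k) = AddMonoidHom.id _ :=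
  AddMonoidHom.functions_ext' _ _ _ fun q => ZMod.addMonoidHom_ext_one <| by
    simp only [AddMonoidHom.comp_apply, AddMonoidHom.single_apply, levelGen_single_one,
      AddMonoidHom.id_apply]
    exact levelDet_wedge_quotSingle S k (mem_pairs.mp q.2).1 (mem_pairs.mp q.2).2 q.1.2

theorem levelGen_comp_levelDet : (levelGen ℓ f S k).comp (levelDet ℓ f S k) = AddMonoidHom.id _ :=
  Wedge2.addHom_ext_of_closure_eq_top (closure_quotSingle S k) <| by
    rintro _ ⟨a, ha, rfl⟩ _ ⟨b, hb, rfl⟩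
    simp only [AddMonoidHom.comp_apply, AddMonoidHom.id_apply]
    rcases lt_trichotomy a b with hab | rfl | hba
    · rw [levelDet_wedge_quotSingle S k ha hb hab, levelGen_single_one]
    · rw [wedge_self, map_zero, map_zero]
    · rw [wedge_swap, map_neg, map_neg, levelDet_wedge_quotSingle S k hb ha hba,
        levelGen_single_one]

variable (ℓ f) in
def levelEquiv : Wedge2 (𝒜 ⧸ 𝒰) ≃+ ∀ q : pairs S, ZMod (ℓ ^ pairLevel f q.1.1 k) :=
  (levelDet ℓ f S k).toAddEquiv (levelGen ℓ f S k) (levelGen_comp_levelDet S k)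
    (levelDet_comp_levelGen S k)

end FiniteLevel

section Inverse

variable {ℓ : ℕ} [Fact ℓ.Prime] {Ω : Type} [LinearOrder Ω] {f : Ω → ℕ∞}

local notation "𝒜" => A ℓ Ω f

def levelLift (S : Finset Ω) (k : ℕ) (t : T ℓ Ω f) : Wedge2 (𝒜 ⧸ congrSubgroup ℓ f S k) :=
  (levelEquiv ℓ f S k).symm fun q => Mc.toZModPow ℓ _ (pairLevel_le q.1.1 k) (t q.1)

theorem wedgeDet_levelLift {S : Finset Ω} {k : ℕ} {p : {p : Ω × Ω // p.1 < p.2}}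
    (hp : p ∈ pairs S) {m : ℕ} (hmk : m ≤ k) (hm : (m : ℕ∞) ≤ min (f p.1.1) (f p.1.2))
    (hV : congrSubgroup ℓ f S k ≤ congrSubgroup ℓ f {p.1.1, p.1.2} m) (t : T ℓ Ω f) :
    wedgeDet hm _ hV (levelLift S k t) = Mc.toZModPow ℓ m hm (t p) := by
  have hlevel : levelDet ℓ f S k (levelLift S k t) ⟨p, hp⟩ =
      Mc.toZModPow ℓ _ (pairLevel_le p.1 k) (t p) :=
    congrFun ((levelEquiv ℓ f S k).apply_symm_apply _) ⟨p, hp⟩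
  have hm' : m ≤ pairLevel f p.1 k := le_truncLevel hm hmk
  calc wedgeDet hm _ hV (levelLift S k t)
      = ZMod.castHom (pow_dvd_pow ℓ hm') _ (levelDet ℓ f S k (levelLift S k t) ⟨p, hp⟩) :=
        (castHom_wedgeDet (pairLevel_le p.1 k) hm' (congrSubgroup_le_of_mem_pairs k hp) _).symm
    _ = Mc.toZModPow ℓ m hm (t p) := by rw [hlevel, Mc.castHom_toZModPow hm']

theorem transMap_levelLift {S S' : Finset Ω} {k k' : ℕ} (hS : S ⊆ S') (hk : k ≤ k')
    (t : T ℓ Ω f) :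
    transMap 𝒜 (U := congrOpenSub ℓ f S' k') (V := congrOpenSub ℓ f S k)
      (congrSubgroup_anti hS hk) (levelLift S' k' t) = levelLift S k t :=
  (levelEquiv ℓ f S k).injective <| funext fun q => by
    have hq' : q.1 ∈ pairs S' := mem_pairs.mpr ⟨hS (mem_pairs.mp q.2).1, hS (mem_pairs.mp q.2).2⟩
    have hV := congrSubgroup_le_of_mem_pairs (ℓ := ℓ) (f := f) k q.2
    change levelDet ℓ f S k _ q = levelDet ℓ f S k _ q
    exact (wedgeDet_transMap (V := congrOpenSub ℓ f S k) _ _ hV _).trans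
      ((wedgeDet_levelLift hq' ((truncLevel_le_right _ _).trans hk) _
        ((congrSubgroup_anti hS hk).trans hV) t).trans
          (wedgeDet_levelLift q.2 (truncLevel_le_right _ _) _ hV t).symm)

theorem transMap_levelLift_eq {U : OpenSub 𝒜} {S S' : Finset Ω} {k k' : ℕ}
    (h : congrSubgroup ℓ f S k ≤ U.1) (h' : congrSubgroup ℓ f S' k' ≤ U.1) (t : T ℓ Ω f) :
    transMap 𝒜 (U := congrOpenSub ℓ f S k) h (levelLift S k t) =
      transMap 𝒜 (U := congrOpenSub ℓ f S' k') h' (levelLift S' k' t) := by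
  rw [← transMap_levelLift Finset.subset_union_left (le_max_left k k') t,
    ← transMap_levelLift Finset.subset_union_right (le_max_right k k') t,
    transMap_transMap, transMap_transMap]

theorem continuous_levelLift (S : Finset Ω) (k : ℕ) :
    Continuous (levelLift (ℓ := ℓ) (f := f) S k) :=
  continuous_of_discreteTopology.comp <| continuous_pi fun q =>
    (Mc.continuous_toZModPow _ (pairLevel_le q.1.1 k)).comp (continuous_apply q.1)

theorem levelLift_psi (z : ProfWedge2 𝒜) (S : Finset Ω) (k : ℕ) :
    levelLift S k (psi ℓ f z) = z.1 (congrOpenSub ℓ f S k) :=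
  (levelEquiv ℓ f S k).injective <| funext fun q => by
    change levelDet ℓ f S k _ q = levelDet ℓ f S k _ q
    have hV := congrSubgroup_le_of_mem_pairs (ℓ := ℓ) (f := f) k q.2
    exact (wedgeDet_levelLift q.2 (truncLevel_le_right _ _) _ hV _).trans
      (toZModPow_psi z q.1 _ (U := congrOpenSub ℓ f S k) hV)

def psiInvFamily (t : T ℓ Ω f) (U : OpenSub 𝒜) : Wedge2 (𝒜 ⧸ U.1) :=
  transMap 𝒜 (U := congrOpenSub ℓ f _ _) (exists_congrSubgroup_le U).choose_spec.choose_spec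
    (levelLift _ _ t)

theorem psiInvFamily_eq (t : T ℓ Ω f) {U : OpenSub 𝒜} {S : Finset Ω} {k : ℕ}
    (h : congrSubgroup ℓ f S k ≤ U.1) :
    psiInvFamily t U = transMap 𝒜 (U := congrOpenSub ℓ f S k) h (levelLift S k t) :=
  transMap_levelLift_eq _ h t

def psiInv (t : T ℓ Ω f) : ProfWedge2 𝒜 :=
  ⟨psiInvFamily t, fun U V h => by
    obtain ⟨S, k, hU⟩ := exists_congrSubgroup_le U
    rw [psiInvFamily_eq t hU, psiInvFamily_eq t (hU.trans h), transMap_transMap]⟩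

theorem psi_psiInv (t : T ℓ Ω f) : psi ℓ f (psiInv t) = t :=
  funext fun p => Mc.ext fun m hm => by
    rw [toZModPow_psi _ p hm (U := congrOpenSub ℓ f _ m) le_rfl]
    change wedgeDet hm _ _ (psiInvFamily t _) = _
    rw [psiInvFamily_eq t (S := {p.1.1, p.1.2}) (k := m) le_rfl]
    exact (wedgeDet_transMap _ _ _ _).trans (wedgeDet_levelLift (mem_pairs.mpr
      ⟨Finset.mem_insert_self _ _, Finset.mem_insert_of_mem (Finset.mem_singleton_self _)⟩) le_rfl
        _ _ t)

theorem psiInv_psi (z : ProfWedge2 𝒜) : psiInv (psi ℓ f z) = z :=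
  Subtype.ext <| funext fun U => by
    obtain ⟨S, k, h⟩ := exists_congrSubgroup_le U
    change psiInvFamily _ U = _
    rw [psiInvFamily_eq _ h, levelLift_psi]
    exact z.2 _ U h

theorem continuous_psiInv : Continuous (psiInv (ℓ := ℓ) (f := f)) := by
  have h : Continuous (psiInvFamily (ℓ := ℓ) (f := f)) :=
    continuous_pi fun _ => continuous_of_discreteTopology.comp (continuous_levelLift _ _)
  exact h.subtype_mk _

variable (ℓ f) in
def psiEquiv : ProfWedge2 𝒜 ≃+ T ℓ Ω f where
  toFun := psi ℓ f
  invFun := psiInv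
  left_inv := psiInv_psi
  right_inv := psi_psiInv
  map_add' := map_add (psi ℓ f)

end Inverse

theorem statement14_general (ℓ : ℕ) [Fact ℓ.Prime]
    (Ω : Type) [LinearOrder Ω] (f : Ω → ℕ∞) :
    -- there is a unique continuous homomorphism `ψ_•` with
    -- `ψ_• (x ∧ y) = (x_v·y_w − x_w·y_v)_{v<w}`, ...
    (∃! ψ : ProfWedge2 (A ℓ Ω f) →+ T ℓ Ω f,
      Continuous ⇑ψ ∧ ∀ x y : A ℓ Ω f, ψ (bUniv (A ℓ Ω f) x y) = detF ℓ Ω f x y) ∧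
    -- ... and it is an isomorphism of topological groups:
    ∀ ψ : ProfWedge2 (A ℓ Ω f) →+ T ℓ Ω f, Continuous ⇑ψ →
      (∀ x y : A ℓ Ω f, ψ (bUniv (A ℓ Ω f) x y) = detF ℓ Ω f x y) →
      ∃ e : ProfWedge2 (A ℓ Ω f) ≃+ T ℓ Ω f,
        (∀ z, e z = ψ z) ∧ Continuous ⇑e ∧ Continuous ⇑e.symm := by
  have huniq : ∀ ψ : ProfWedge2 (A ℓ Ω f) →+ T ℓ Ω f, Continuous ψ →
      (∀ x y, ψ (bUniv (A ℓ Ω f) x y) = detF ℓ Ω f x y) → ψ = psi ℓ f :=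
    fun ψ hψ hdet => ProfWedge2.addHom_ext hψ continuous_psi fun x y =>
      (hdet x y).trans (psi_bUniv x y).symm
  refine ⟨⟨psi ℓ f, ⟨continuous_psi, psi_bUniv⟩, fun ψ hψ => huniq ψ hψ.1 hψ.2⟩,
    fun ψ hψ hdet => ?_⟩
  obtain rfl := huniq ψ hψ hdet
  exact ⟨psiEquiv ℓ f, fun _ => rfl, continuous_psi, continuous_psiInv⟩

theorem statement14 (ℓ : ℕ) [Fact ℓ.Prime]
    (Ω : Type) [LinearOrder Ω] [Countable Ω] (f : Ω → ℕ∞) :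
    -- there is a unique continuous homomorphism `ψ_•` with
    -- `ψ_• (x ∧ y) = (x_v·y_w − x_w·y_v)_{v<w}`, ...
    (∃! ψ : ProfWedge2 (A ℓ Ω f) →+ T ℓ Ω f,
      Continuous ⇑ψ ∧ ∀ x y : A ℓ Ω f, ψ (bUniv (A ℓ Ω f) x y) = detF ℓ Ω f x y) ∧
    -- ... and it is an isomorphism of topological groups:
    ∀ ψ : ProfWedge2 (A ℓ Ω f) →+ T ℓ Ω f, Continuous ⇑ψ →
      (∀ x y : A ℓ Ω f, ψ (bUniv (A ℓ Ω f) x y) = detF ℓ Ω f x y) →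
      ∃ e : ProfWedge2 (A ℓ Ω f) ≃+ T ℓ Ω f,
        (∀ z, e z = ψ z) ∧ Continuous ⇑e ∧ Continuous ⇑e.symm :=
  statement14_general ℓ Ω f
end
end
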